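/- arXiv:2103.06000 — 7 statements merged into one kernel-verified Lean document; each statement's English description precedes it below -/
import Mathlib

section
/- For every t ∈ ℂ, every dimension d ≥ 1, every function c : ℕ^d × ℕ^d → ℂ and all multi-indices α, β ∈ ℕ^d one has T_{0,-t}(T_{0,t} c)(α,β) = c(α,β). Consequently the binomial operator T_{0,t} is a bijection on the space of all complex sequences on ℕ^d × ℕ^d, with inverse T_{0,-t}. -/
open Finset

noncomputable section

/-- Size of a multi-index: `|α| = α₁ + ⋯ + α_d`. -/
def msize {d : ℕ} (α : Fin d → ℕ) : ℕ := ∑ i, α i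

/-- Factorial of a multi-index: `α! = ∏ᵢ αᵢ!`. -/
def mfact {d : ℕ} (α : Fin d → ℕ) : ℕ := ∏ i, Nat.factorial (α i)

/-- Binomial coefficient of multi-indices: `C(α,γ) = ∏ᵢ choose(αᵢ,γᵢ)`. -/
def mchoose {d : ℕ} (α γ : Fin d → ℕ) : ℕ := ∏ i, Nat.choose (α i) (γ i)

/-- The binomial operator
`(T_{0,t} c)(α,β) = Σ_{γ ≤ α, γ ≤ β} (C(α,γ) C(β,γ))^{1/2} t^{|γ|} c(α−γ, β−γ)`. -/
def T0 {d : ℕ} (t : ℂ) (c : ((Fin d → ℕ) × (Fin d → ℕ)) → ℂ) :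
    ((Fin d → ℕ) × (Fin d → ℕ)) → ℂ := fun p =>
  ∑ γ ∈ Finset.Iic p.1 ∩ Finset.Iic p.2,
    ((Real.sqrt ((mchoose p.1 γ * mchoose p.2 γ : ℕ)) : ℝ) : ℂ) * t ^ (msize γ) *
      c (p.1 - γ, p.2 - γ)

/-! The operators form a one-parameter group, `T0 s ∘ T0 t = T0 (s + t)` with `T0 0 = id`.
Composing two of them and collecting the terms with the same total shift `σ = γ + δ`, the
trinomial revision `C(α,γ) C(α-γ,σ-γ) = C(α,σ) C(σ,γ)` (and the same for `β`) makes the square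
roots combine to `C(σ,γ) √(C(α,σ) C(β,σ))`, and the remaining sum over `γ ≤ σ` is the
multi-index binomial expansion of `(s + t)^|σ|`. -/

section Reindex

variable {M N : Type*} [AddCommMonoid M] [PartialOrder M] [CanonicallyOrderedAdd M] [Sub M]
  [OrderedSub M] [AddLeftReflectLE M] [LocallyFiniteOrderBot M] [DecidableEq M]
  [AddCommMonoid N]

lemma sum_Iic_inter_Iic_tsub_eq_sum_Iic (α β : M) (G : M → M → N) :
    ∑ γ ∈ Iic α ∩ Iic β, ∑ δ ∈ Iic (α - γ) ∩ Iic (β - γ), G γ δ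
      = ∑ σ ∈ Iic α ∩ Iic β, ∑ γ ∈ Iic σ, G γ (σ - γ) := by
  rw [sum_sigma', sum_sigma']
  refine sum_nbij' (fun x => ⟨x.1 + x.2, x.1⟩) (fun x => ⟨x.2, x.1 - x.2⟩) ?_ ?_ ?_ ?_ ?_
  · rintro ⟨γ, δ⟩ h
    simp only [mem_sigma, mem_inter, mem_Iic] at h ⊢
    obtain ⟨⟨hα, hβ⟩, hδα, hδβ⟩ := h
    exact ⟨⟨(le_tsub_iff_left hα).1 hδα, (le_tsub_iff_left hβ).1 hδβ⟩, le_self_add⟩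
  · rintro ⟨σ, γ⟩ h
    simp only [mem_sigma, mem_inter, mem_Iic] at h ⊢
    obtain ⟨⟨hα, hβ⟩, hγ⟩ := h
    exact ⟨⟨hγ.trans hα, hγ.trans hβ⟩, tsub_le_tsub_right hα γ, tsub_le_tsub_right hβ γ⟩
  · rintro ⟨γ, δ⟩ -
    simp
  · rintro ⟨σ, γ⟩ h
    simp only [mem_sigma, mem_Iic] at h
    simp [add_tsub_cancel_of_le h.2]
  · rintro ⟨γ, δ⟩ -
    simp

end Reindex

section MultiIndex

variable {d : ℕ}

lemma mchoose_mul {α σ γ : Fin d → ℕ} (hγσ : γ ≤ σ) :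
    mchoose α σ * mchoose σ γ = mchoose α γ * mchoose (α - γ) (σ - γ) := by
  simp only [mchoose, ← prod_mul_distrib]
  exact prod_congr rfl fun i _ => Nat.choose_mul (hγσ i)

lemma sum_mchoose_mul_pow_mul_pow {R : Type*} [CommSemiring R] (x y : R) (σ : Fin d → ℕ) :
    ∑ γ ∈ Iic σ, (mchoose σ γ : R) * x ^ msize γ * y ^ msize (σ - γ) = (x + y) ^ msize σ := by
  have binomial (n : ℕ) : ∑ g ∈ Iic n, (n.choose g : R) * x ^ g * y ^ (n - g) = (x + y) ^ n := by
    rw [add_pow, ← Nat.range_succ_eq_Iic]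
    exact sum_congr rfl fun g _ => by ring
  rw [msize, ← prod_pow_eq_pow_sum]
  simp only [← binomial, prod_univ_sum]
  refine sum_congr rfl fun γ _ => ?_
  simp only [mchoose, msize, Pi.sub_apply, Nat.cast_prod, prod_mul_distrib, prod_pow_eq_pow_sum]

lemma msize_eq_zero {γ : Fin d → ℕ} : msize γ = 0 ↔ γ = 0 := by
  simp [msize, funext_iff]

end MultiIndex

lemma sqrt_mul_mul_sqrt_mul {a b a' b' A B k : ℕ} (ha : a * a' = A * k) (hb : b * b' = B * k) :
    √((a * b : ℕ) : ℝ) * √((a' * b' : ℕ) : ℝ) = k * √((A * B : ℕ) : ℝ) := by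
  have hprod : ((a * b * (a' * b') : ℕ) : ℝ) = (k : ℝ) ^ 2 * ((A * B : ℕ) : ℝ) := by
    push_cast
    linear_combination (b * b' : ℝ) * (by exact_mod_cast ha : (a * a' : ℝ) = A * k)
      + (A * k : ℝ) * (by exact_mod_cast hb : (b * b' : ℝ) = B * k)
  rw [← Real.sqrt_mul (Nat.cast_nonneg _), ← Nat.cast_mul, hprod,
    Real.sqrt_mul (by positivity), Real.sqrt_sq (Nat.cast_nonneg _)]

section BinomialOperator

variable {d : ℕ}

lemma sqrt_mchoose_mul_sqrt_mchoose {α β σ γ : Fin d → ℕ} (hγσ : γ ≤ σ) :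
    √((mchoose α γ * mchoose β γ : ℕ) : ℝ)
        * √((mchoose (α - γ) (σ - γ) * mchoose (β - γ) (σ - γ) : ℕ) : ℝ)
      = mchoose σ γ * √((mchoose α σ * mchoose β σ : ℕ) : ℝ) :=
  sqrt_mul_mul_sqrt_mul (mchoose_mul hγσ).symm (mchoose_mul hγσ).symm

theorem T0_T0 (s t : ℂ) (c : (Fin d → ℕ) × (Fin d → ℕ) → ℂ) :
    T0 s (T0 t c) = T0 (s + t) c := by
  ext ⟨α, β⟩
  simp only [T0, mul_sum, sum_Iic_inter_Iic_tsub_eq_sum_Iic]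
  refine sum_congr rfl fun σ _ => ?_
  rw [← sum_mchoose_mul_pow_mul_pow s t σ, mul_sum, sum_mul]
  refine sum_congr rfl fun γ hγ => ?_
  have hγσ : γ ≤ σ := mem_Iic.1 hγ
  have hcoeff := congrArg ((↑) : ℝ → ℂ) (sqrt_mchoose_mul_sqrt_mchoose (α := α) (β := β) hγσ)
  simp only [Complex.ofReal_mul, Complex.ofReal_natCast] at hcoeff
  rw [tsub_tsub_tsub_cancel_right hγσ, tsub_tsub_tsub_cancel_right hγσ]
  linear_combination (s ^ msize γ * t ^ msize (σ - γ) * c (α - σ, β - σ)) * hcoeff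

theorem T0_zero (c : (Fin d → ℕ) × (Fin d → ℕ) → ℂ) : T0 0 c = c := by
  ext ⟨α, β⟩
  rw [T0, sum_eq_single_of_mem 0 (by simp)]
  · simp [mchoose, msize]
  · intro γ _ hγ
    simp [zero_pow (msize_eq_zero.not.2 hγ)]

end BinomialOperator

theorem stmt_0_general (t : ℂ) (d : ℕ) :
    (∀ (c : ((Fin d → ℕ) × (Fin d → ℕ)) → ℂ) (α β : Fin d → ℕ),
        T0 (-t) (T0 t c) (α, β) = c (α, β)) ∧
      Function.Bijective (T0 (d := d) t) ∧
      Function.LeftInverse (T0 (d := d) (-t)) (T0 (d := d) t) ∧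
      Function.RightInverse (T0 (d := d) (-t)) (T0 (d := d) t) := by
  have hleft : Function.LeftInverse (T0 (d := d) (-t)) (T0 (d := d) t) := fun c => by
    rw [T0_T0, neg_add_cancel, T0_zero]
  have hright : Function.RightInverse (T0 (d := d) (-t)) (T0 (d := d) t) := fun c => by
    rw [T0_T0, add_neg_cancel, T0_zero]
  exact ⟨fun c α β => congrFun (hleft c) (α, β), ⟨hleft.injective, hright.surjective⟩,
    hleft, hright⟩

/-- `T_{0,-t} ∘ T_{0,t} = id` pointwise; consequently `T_{0,t}` is a
bijection on the space of all complex sequences on `ℕ^d × ℕ^d`, with inverse `T_{0,-t}`. -/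
theorem stmt_0 (t : ℂ) (d : ℕ) (hd : 1 ≤ d) :
    (∀ (c : ((Fin d → ℕ) × (Fin d → ℕ)) → ℂ) (α β : Fin d → ℕ),
        T0 (-t) (T0 t c) (α, β) = c (α, β)) ∧
      Function.Bijective (T0 (d := d) t) ∧
      Function.LeftInverse (T0 (d := d) (-t)) (T0 (d := d) t) ∧
      Function.RightInverse (T0 (d := d) (-t)) (T0 (d := d) t) :=
  stmt_0_general t d

end
end

section
/- Let S₀ be the operator on sequences defined by (S₀ c)(α,β) = i^{|α|+|β|} c(α,β), where i is the imaginary unit. Then for every t ∈ ℂ, every c : ℕ^d × ℕ^d → ℂ and all α, β ∈ ℕ^d one has (T_{0,-t} c)(α,β) = i^{−(|α|+|β|)} · (T_{0,t}(S₀ c))(α,β); that is, T_{0,-t} = S₀^{-1} ∘ T_{0,t} ∘ S₀. -/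
open Finset

noncomputable section

/-- The operator `(S₀ c)(α,β) = i^{|α|+|β|} c(α,β)`. -/
def S0 {d : ℕ} (c : ((Fin d → ℕ) × (Fin d → ℕ)) → ℂ) :
    ((Fin d → ℕ) × (Fin d → ℕ)) → ℂ := fun p =>
  Complex.I ^ (msize p.1 + msize p.2) * c p

open Complex

lemma msize_sub_add {d : ℕ} {α γ : Fin d → ℕ} (h : γ ≤ α) :
    msize (α - γ) + msize γ = msize α := by
  simp only [msize, ← sum_add_distrib]
  exact sum_congr rfl fun i _ => Nat.sub_add_cancel (h i)

lemma I_pow_add_add_mul_neg_pow (t : ℂ) (m n k : ℕ) :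
    I ^ (m + k + (n + k)) * (-t) ^ k = I ^ (m + n) * t ^ k := by
  rw [show m + k + (n + k) = m + n + 2 * k by ring, pow_add, pow_mul, I_sq, mul_assoc,
    ← mul_pow, neg_one_mul, neg_neg]

theorem stmt_1_general (t : ℂ) (d : ℕ)
    (c : ((Fin d → ℕ) × (Fin d → ℕ)) → ℂ) (α β : Fin d → ℕ) :
    T0 (-t) c (α, β) =
      (Complex.I ^ (msize α + msize β))⁻¹ * T0 t (S0 c) (α, β) := by
  rw [eq_inv_mul_iff_mul_eq₀ (pow_ne_zero _ I_ne_zero)]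
  simp only [T0, S0, mul_sum]
  refine sum_congr rfl fun γ hγ => ?_
  obtain ⟨hα, hβ⟩ : γ ≤ α ∧ γ ≤ β := by simpa using hγ
  rw [← msize_sub_add hα, ← msize_sub_add hβ]
  linear_combination (((Real.sqrt ((mchoose α γ * mchoose β γ : ℕ)) : ℝ) : ℂ) *
    c (α - γ, β - γ)) * I_pow_add_add_mul_neg_pow t (msize (α - γ)) (msize (β - γ)) (msize γ)

/-- `T_{0,-t} = S₀^{-1} ∘ T_{0,t} ∘ S₀`, i.e.
`(T_{0,-t} c)(α,β) = i^{−(|α|+|β|)} (T_{0,t}(S₀ c))(α,β)`. -/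
theorem stmt_1 (t : ℂ) (d : ℕ) (hd : 1 ≤ d)
    (c : ((Fin d → ℕ) × (Fin d → ℕ)) → ℂ) (α β : Fin d → ℕ) :
    T0 (-t) c (α, β) =
      (Complex.I ^ (msize α + msize β))⁻¹ * T0 t (S0 c) (α, β) :=
  stmt_1_general t d c α β

end
end

section
/- Let t ∈ ℂ, 0 < s < 1/2, d ≥ 1 and c : ℕ^d × ℕ^d → ℂ. Assume that for every r > 0 there exist ρ > 0 and C > 0 such that |c(α,β)| ≤ C · exp(−ρ |α|^{1/(2s)} + r |β|^{1/(2s)}) for all α, β ∈ ℕ^d. Then T_{0,t} c satisfies the same property: for every r > 0 there exist ρ > 0 and C > 0 such that |(T_{0,t} c)(α,β)| ≤ C · exp(−ρ |α|^{1/(2s)} + r |β|^{1/(2s)}) for all α, β. (This expresses that T_{0,t} maps the space ℓ_{𝓑,s}(ℕ^{2d}) into itself.) -/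
/-!
Put `κ = 1/(2s) > 1`. Each coefficient of `T_{0,t} c` at `(α, β)` is a sum of at most
`2^|β|` terms, whose weights `√(C(α,γ) C(β,γ)) |t|^|γ|` grow at most exponentially in
`|α| + |β|`; since `κ > 1`, such exponential factors are absorbed by `exp (ε |·|^κ)` for any
`ε > 0`. The shift `α ↦ α - γ` costs only part of the decay in `α`: either `|γ|` is small
compared with `|α|`, so `|α - γ|^κ ≥ |α|^κ / 2`, or `|α|^κ` is controlled by `|γ|^κ ≤ |β|^κ`,
which the arbitrarily small growth rate allowed in `β` pays for.
-/

open Finset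

noncomputable section

namespace Real

lemma exists_mul_le_mul_rpow_add {κ : ℝ} (hκ : 1 < κ) (A : ℝ) {ε : ℝ} (hε : 0 < ε) :
    ∃ M, ∀ x : ℝ, 0 ≤ x → A * x ≤ ε * x ^ κ + M := by
  obtain ⟨N, hN⟩ := Filter.eventually_atTop.1 <|
    (tendsto_rpow_atTop (sub_pos.2 hκ)).eventually_ge_atTop (A / ε)
  refine ⟨|A| * |N|, fun x hx => ?_⟩
  have hM : 0 ≤ |A| * |N| := by positivity
  rcases le_or_gt N x with hNx | hxN
  · have hA : A ≤ ε * x ^ (κ - 1) := (div_le_iff₀' hε).1 (hN x hNx)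
    calc A * x ≤ ε * x ^ (κ - 1) * x := mul_le_mul_of_nonneg_right hA hx
      _ = ε * x ^ κ := by
        rw [mul_assoc, ← rpow_add_one' hx (by linarith), sub_add_cancel]
      _ ≤ ε * x ^ κ + |A| * |N| := le_add_of_nonneg_right hM
  · have hxκ : 0 ≤ ε * x ^ κ := by positivity
    calc A * x ≤ |A| * x := mul_le_mul_of_nonneg_right (le_abs_self A) hx
      _ ≤ |A| * |N| := by gcongr; exact hxN.le.trans (le_abs_self N)
      _ ≤ ε * x ^ κ + |A| * |N| := le_add_of_nonneg_left hxκ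

lemma exists_pow_le_mul_exp_mul_rpow {κ : ℝ} (hκ : 1 < κ) {q : ℝ} (hq : 0 < q) {ε : ℝ}
    (hε : 0 < ε) : ∃ M > 0, ∀ n : ℕ, q ^ n ≤ M * exp (ε * (n : ℝ) ^ κ) := by
  obtain ⟨M, hM⟩ := exists_mul_le_mul_rpow_add hκ (log q) hε
  refine ⟨exp M, exp_pos M, fun n => ?_⟩
  calc q ^ n = exp (log q * n) := by rw [mul_comm, exp_nat_mul, exp_log hq]
    _ ≤ exp (ε * (n : ℝ) ^ κ + M) := exp_le_exp.2 (hM n n.cast_nonneg)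
    _ = exp M * exp (ε * (n : ℝ) ^ κ) := by rw [exp_add, mul_comm]

/-- For `b ≤ δ a` with `δ = 1/(2κ)` Bernoulli gives `(a - b)^κ ≥ a^κ / 2`; otherwise
`a^κ ≤ δ^(-κ) b^κ`. -/
lemma exists_mul_rpow_le_mul_rpow_sub_add {κ : ℝ} (hκ : 1 ≤ κ) {ρ ε : ℝ} (hρ : 0 < ρ)
    (hε : 0 < ε) : ∃ ρ' > 0, ∀ a b : ℝ, 0 ≤ b → b ≤ a →
      ρ' * a ^ κ ≤ ρ * (a - b) ^ κ + ε * b ^ κ := by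
  set δ := 1 / (2 * κ)
  have hδ : 0 < δ := by positivity
  have hκδ : κ * δ = 1 / 2 := by simp only [δ]; field_simp
  have hδ_le : δ ≤ 1 / 2 := by nlinarith
  refine ⟨min (ρ / 2) (ε * δ ^ κ), by positivity, fun a b hb hba => ?_⟩
  have ha : 0 ≤ a := hb.trans hba
  have hab : 0 ≤ ρ * (a - b) ^ κ := mul_nonneg hρ.le (rpow_nonneg (sub_nonneg.2 hba) κ)
  have hbκ : 0 ≤ ε * b ^ κ := mul_nonneg hε.le (rpow_nonneg hb κ)
  rcases le_or_gt b (δ * a) with hbδ | hδb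
  · have hbern : 1 / 2 ≤ (1 - δ) ^ κ := by
      have := one_add_mul_self_le_rpow_one_add (by linarith : -1 ≤ -δ) hκ
      rw [← sub_eq_add_neg] at this
      linarith
    have hsub : (1 - δ) * a ≤ a - b := by linarith
    calc min (ρ / 2) (ε * δ ^ κ) * a ^ κ ≤ ρ * (1 / 2 * a ^ κ) := by
          rw [← mul_assoc, mul_one_div]
          exact mul_le_mul_of_nonneg_right (min_le_left _ _) (rpow_nonneg ha κ)
      _ ≤ ρ * ((1 - δ) * a) ^ κ := by
          rw [mul_rpow (by linarith) ha]
          gcongr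
      _ ≤ ρ * (a - b) ^ κ := by gcongr; nlinarith
      _ ≤ ρ * (a - b) ^ κ + ε * b ^ κ := le_add_of_nonneg_right hbκ
  · have hpow : δ ^ κ * a ^ κ ≤ b ^ κ := by
      rw [← mul_rpow hδ.le ha]
      exact rpow_le_rpow (by positivity) hδb.le (by linarith)
    calc min (ρ / 2) (ε * δ ^ κ) * a ^ κ ≤ ε * δ ^ κ * a ^ κ :=
          mul_le_mul_of_nonneg_right (min_le_right _ _) (rpow_nonneg ha κ)
      _ ≤ ε * b ^ κ := by rw [mul_assoc]; exact mul_le_mul_of_nonneg_left hpow hε.le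
      _ ≤ ρ * (a - b) ^ κ + ε * b ^ κ := le_add_of_nonneg_left hab

end Real

section MultiIndex

variable {d : ℕ}

lemma msize_mono {α β : Fin d → ℕ} (h : α ≤ β) : msize α ≤ msize β :=
  sum_le_sum fun i _ => h i

lemma cast_msize_sub {α γ : Fin d → ℕ} (h : γ ≤ α) :
    (msize (α - γ) : ℝ) = msize α - msize γ := by
  rw [eq_sub_iff_add_eq, ← Nat.cast_add, msize, msize, msize, ← sum_add_distrib]
  exact congrArg _ (sum_congr rfl fun i _ => Nat.sub_add_cancel (h i))

lemma mchoose_le_two_pow_msize (α γ : Fin d → ℕ) : mchoose α γ ≤ 2 ^ msize α := by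
  rw [mchoose, msize, ← prod_pow_eq_pow_sum]
  exact prod_le_prod' fun i _ => Nat.choose_le_two_pow _ _

lemma card_Iic_le_two_pow_msize (β : Fin d → ℕ) : #(Iic β) ≤ 2 ^ msize β := by
  rw [Pi.card_Iic, msize, ← prod_pow_eq_pow_sum]
  exact prod_le_prod' fun i _ => by simpa using Nat.lt_two_pow_self

lemma sqrt_mchoose_mul_mchoose_le (α β γ : Fin d → ℕ) :
    √((mchoose α γ * mchoose β γ : ℕ) : ℝ) ≤ 2 ^ msize α * 2 ^ msize β := by
  have h : ((mchoose α γ * mchoose β γ : ℕ) : ℝ) ≤ 2 ^ msize α * 2 ^ msize β := by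
    exact_mod_cast Nat.mul_le_mul (mchoose_le_two_pow_msize α γ) (mchoose_le_two_pow_msize β γ)
  rw [Real.sqrt_le_left (by positivity)]
  exact h.trans (le_self_pow₀ (one_le_mul_of_one_le_of_one_le (one_le_pow₀ one_le_two)
    (one_le_pow₀ one_le_two)) two_ne_zero)

end MultiIndex

lemma norm_T0_le {d : ℕ} (t : ℂ) (c : (Fin d → ℕ) × (Fin d → ℕ) → ℂ) {α β : Fin d → ℕ} {K : ℝ}
    (hK : ∀ γ, γ ≤ α → γ ≤ β → ‖c (α - γ, β - γ)‖ ≤ K) :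
    ‖T0 t c (α, β)‖ ≤ 2 ^ msize α * (4 * (1 + ‖t‖)) ^ msize β * K := by
  have ht : 1 ≤ 1 + ‖t‖ := le_add_of_nonneg_right (norm_nonneg t)
  have hK0 : 0 ≤ K := (norm_nonneg _).trans (hK 0 (fun _ => Nat.zero_le _) fun _ => Nat.zero_le _)
  set B : ℝ := 2 ^ msize α * 2 ^ msize β * (1 + ‖t‖) ^ msize β * K
  have hterm : ∀ γ ∈ Iic α ∩ Iic β,
      ‖(√((mchoose α γ * mchoose β γ : ℕ) : ℝ) : ℂ) * t ^ msize γ * c (α - γ, β - γ)‖ ≤ B := by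
    intro γ hγ
    rw [mem_inter, mem_Iic, mem_Iic] at hγ
    rw [norm_mul, norm_mul, Complex.norm_real, Real.norm_of_nonneg (Real.sqrt_nonneg _), norm_pow]
    have ht_pow : ‖t‖ ^ msize γ ≤ (1 + ‖t‖) ^ msize β :=
      (pow_le_pow_left₀ (norm_nonneg t) (by linarith) _).trans
        (pow_le_pow_right₀ ht (msize_mono hγ.2))
    exact mul_le_mul (mul_le_mul (sqrt_mchoose_mul_mchoose_le α β γ) ht_pow (by positivity)
      (by positivity)) (hK γ hγ.1 hγ.2) (norm_nonneg _) (by positivity)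
  have hcard : (#(Iic α ∩ Iic β) : ℝ) ≤ 2 ^ msize β := by
    exact_mod_cast (card_le_card inter_subset_right).trans (card_Iic_le_two_pow_msize β)
  calc ‖T0 t c (α, β)‖
      ≤ ∑ γ ∈ Iic α ∩ Iic β,
          ‖(√((mchoose α γ * mchoose β γ : ℕ) : ℝ) : ℂ) * t ^ msize γ * c (α - γ, β - γ)‖ :=
        norm_sum_le _ _
    _ ≤ #(Iic α ∩ Iic β) * B := by rw [← nsmul_eq_mul]; exact sum_le_card_nsmul _ _ _ hterm
    _ ≤ 2 ^ msize β * B := mul_le_mul_of_nonneg_right hcard (by positivity)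
    _ = 2 ^ msize α * (4 * (1 + ‖t‖)) ^ msize β * K := by
        rw [show (4 : ℝ) = 2 * 2 by norm_num, mul_pow, mul_pow]; ring

/-- Membership in `ℓ_{𝓑,s}(ℕ^{2d})`, written with the exponent `κ = 1/(2s)`. -/
def MemℓB {d : ℕ} (κ : ℝ) (c : (Fin d → ℕ) × (Fin d → ℕ) → ℂ) : Prop :=
  ∀ r > (0:ℝ), ∃ ρ > (0:ℝ), ∃ C > (0:ℝ), ∀ α β : Fin d → ℕ,
    ‖c (α, β)‖ ≤ C * Real.exp (-ρ * (msize α : ℝ) ^ κ + r * (msize β : ℝ) ^ κ)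

theorem memℓB_T0 {d : ℕ} {κ : ℝ} (hκ : 1 < κ) (t : ℂ) {c : (Fin d → ℕ) × (Fin d → ℕ) → ℂ}
    (hc : MemℓB κ c) : MemℓB κ (T0 t c) := by
  intro r hr
  obtain ⟨ρ, hρ, C, hC, hc⟩ := hc (r / 4) (by positivity)
  obtain ⟨ρ', hρ', hshift⟩ :=
    Real.exists_mul_rpow_le_mul_rpow_sub_add hκ.le hρ (by positivity : 0 < r / 4)
  obtain ⟨M₁, hM₁, hα⟩ :=
    Real.exists_pow_le_mul_exp_mul_rpow hκ two_pos (by positivity : 0 < ρ' / 2)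
  obtain ⟨M₂, hM₂, hβ⟩ := Real.exists_pow_le_mul_exp_mul_rpow hκ
    (by positivity : 0 < 4 * (1 + ‖t‖)) (by positivity : 0 < r / 2)
  refine ⟨ρ' / 2, by positivity, M₁ * M₂ * C, by positivity, fun α β => ?_⟩
  set a : ℝ := (msize α : ℝ)
  set b : ℝ := (msize β : ℝ)
  have hshifted : ∀ γ, γ ≤ α → γ ≤ β →
      ‖c (α - γ, β - γ)‖ ≤ C * Real.exp (-ρ' * a ^ κ + r / 2 * b ^ κ) := by
    intro γ hγα hγβ
    have hg : (0 : ℝ) ≤ msize γ := Nat.cast_nonneg _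
    have hgb : (msize γ : ℝ) ≤ b := Nat.cast_le.2 (msize_mono hγβ)
    have h₁ := hshift a (msize γ) hg (Nat.cast_le.2 (msize_mono hγα))
    have h₂ : (msize γ : ℝ) ^ κ ≤ b ^ κ := Real.rpow_le_rpow hg hgb (by linarith)
    have h₃ : (b - msize γ) ^ κ ≤ b ^ κ :=
      Real.rpow_le_rpow (by linarith) (by linarith) (by linarith)
    refine (hc _ _).trans (mul_le_mul_of_nonneg_left (Real.exp_le_exp.2 ?_) hC.le)
    rw [cast_msize_sub hγα, cast_msize_sub hγβ]
    nlinarith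
  calc ‖T0 t c (α, β)‖
      ≤ 2 ^ msize α * (4 * (1 + ‖t‖)) ^ msize β * (C * Real.exp (-ρ' * a ^ κ + r / 2 * b ^ κ)) :=
        norm_T0_le t c hshifted
    _ ≤ M₁ * Real.exp (ρ' / 2 * a ^ κ) * (M₂ * Real.exp (r / 2 * b ^ κ)) *
          (C * Real.exp (-ρ' * a ^ κ + r / 2 * b ^ κ)) := by
        gcongr
        exacts [hα _, hβ _]
    _ = M₁ * M₂ * C * Real.exp (-(ρ' / 2) * a ^ κ + r * b ^ κ) := by
        have hexp : Real.exp (ρ' / 2 * a ^ κ) * Real.exp (r / 2 * b ^ κ) *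
            Real.exp (-ρ' * a ^ κ + r / 2 * b ^ κ) = Real.exp (-(ρ' / 2) * a ^ κ + r * b ^ κ) := by
          rw [← Real.exp_add, ← Real.exp_add]; ring_nf
        rw [← hexp]; ring

theorem stmt_4_general (t : ℂ) (s : ℝ) (hs : 0 < s) (hs' : s < 1/2) (d : ℕ)
    (c : ((Fin d → ℕ) × (Fin d → ℕ)) → ℂ)
    (hc : ∀ r > (0:ℝ), ∃ ρ > (0:ℝ), ∃ C > (0:ℝ), ∀ α β : Fin d → ℕ,
      ‖c (α, β)‖ ≤
        C * Real.exp (-ρ * ((msize α : ℝ) ^ ((1:ℝ)/(2*s))) +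
          r * ((msize β : ℝ) ^ ((1:ℝ)/(2*s))))) :
    ∀ r > (0:ℝ), ∃ ρ > (0:ℝ), ∃ C > (0:ℝ), ∀ α β : Fin d → ℕ,
      ‖T0 t c (α, β)‖ ≤
        C * Real.exp (-ρ * ((msize α : ℝ) ^ ((1:ℝ)/(2*s))) +
          r * ((msize β : ℝ) ^ ((1:ℝ)/(2*s)))) :=
  memℓB_T0 (by rw [lt_div_iff₀ (by positivity)]; linarith) t hc

/-- `T_{0,t}` maps `ℓ_{𝓑,s}(ℕ^{2d})` into itself, `0 < s < 1/2`. -/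
theorem stmt_4 (t : ℂ) (s : ℝ) (hs : 0 < s) (hs' : s < 1/2) (d : ℕ) (hd : 1 ≤ d)
    (c : ((Fin d → ℕ) × (Fin d → ℕ)) → ℂ)
    (hc : ∀ r > (0:ℝ), ∃ ρ > (0:ℝ), ∃ C > (0:ℝ), ∀ α β : Fin d → ℕ,
      ‖c (α, β)‖ ≤
        C * Real.exp (-ρ * ((msize α : ℝ) ^ ((1:ℝ)/(2*s))) +
          r * ((msize β : ℝ) ^ ((1:ℝ)/(2*s))))) :
    ∀ r > (0:ℝ), ∃ ρ > (0:ℝ), ∃ C > (0:ℝ), ∀ α β : Fin d → ℕ,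
      ‖T0 t c (α, β)‖ ≤
        C * Real.exp (-ρ * ((msize α : ℝ) ^ ((1:ℝ)/(2*s))) +
          r * ((msize β : ℝ) ^ ((1:ℝ)/(2*s)))) :=
  stmt_4_general t s hs hs' d c hc

end
end

section
/- Let d ≥ 1, p ∈ (1,∞), t ∈ ℂ with |t| ≤ 1, 0 < r₁ < 1 and r₂ > r₁/(1−r₁). Then there is a constant C > 0 such that for every b : ℕ^d × ℕ^d → ℂ with Σ_{α,β} |b(α,β)|^p r₁^{−p(|α|+|β|)/2} < ∞, the series (T*_{0,t} b)(α,β) = Σ_{γ ∈ ℕ^d} (C(α+γ,γ) C(β+γ,γ))^{1/2} t^{|γ|} b(α+γ, β+γ) converges absolutely for every (α,β), and Σ_{α,β} |(T*_{0,t} b)(α,β)|^p · r₂^{−p(|α|+|β|)/2} ≤ C^p · Σ_{α,β} |b(α,β)|^p · r₁^{−p(|α|+|β|)/2}. That is, T*_{0,t} extends to a continuous map from ℓ^p_{r₁}(ℕ^{2d}) to ℓ^p_{r₂}(ℕ^{2d}). -/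
open Finset

noncomputable section

/-- The `ℓ^p_r` "norm-power" sum `Σ_{α,β} |b(α,β)|^p r^{−p(|α|+|β|)/2}`, valued in `ℝ≥0∞`. -/
def lpSum {d : ℕ} (p r : ℝ) (b : ((Fin d → ℕ) × (Fin d → ℕ)) → ℂ) : ENNReal :=
  ∑' q : (Fin d → ℕ) × (Fin d → ℕ),
    ENNReal.ofReal (‖b q‖ ^ p *
      r ^ (-(p * ((msize q.1 + msize q.2 : ℕ) : ℝ)) / 2))

/-- One term of the adjoint binomial operator
`(T*_{0,t} b)(α,β) = Σ_{γ} (C(α+γ,γ) C(β+γ,γ))^{1/2} t^{|γ|} b(α+γ, β+γ)`. -/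
def T0starTerm {d : ℕ} (t : ℂ) (b : ((Fin d → ℕ) × (Fin d → ℕ)) → ℂ)
    (p : (Fin d → ℕ) × (Fin d → ℕ)) (γ : Fin d → ℕ) : ℂ :=
  ((Real.sqrt ((mchoose (p.1 + γ) γ * mchoose (p.2 + γ) γ : ℕ)) : ℝ) : ℂ) *
    t ^ (msize γ) * b (p.1 + γ, p.2 + γ)

/-- The adjoint binomial operator `T*_{0,t}`, defined by the (absolutely convergent) series. -/
def T0star {d : ℕ} (t : ℂ) (b : ((Fin d → ℕ) × (Fin d → ℕ)) → ℂ) :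
    ((Fin d → ℕ) × (Fin d → ℕ)) → ℂ := fun p =>
  ∑' γ : Fin d → ℕ, T0starTerm t b p γ

/-!
Put `A = (1 + r₂) r₁ / r₂`, which is `< 1` exactly because `r₂ > r₁ / (1 - r₁)`. Since
`C(α+γ,γ) r₂^{|γ|} ≤ (1 + r₂)^{|α+γ|}` (one term of the binomial expansion), the `γ`-th term of
`(T*_{0,t} b)(α,β)`, rescaled by `r₂^{-(|α|+|β|)/2}`, is at most `A^{|γ|}` times `|b|` rescaled by
`r₁^{-(|α+γ|+|β+γ|)/2}` at `(α+γ, β+γ)`. So the rescaled output is dominated by the superposition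
`Σ_γ A^{|γ|} g(· + (γ,γ))` of shifts of the rescaled input `g`, and Hölder's inequality with the
weights `A^{|γ|}`, together with injectivity of the shifts, bounds its `ℓ^p` norm by
`Σ_γ A^{|γ|} = (1 - A)^{-d}` times that of `g`. Finiteness of the output also gives absolute
convergence of each defining series.
-/

open ENNReal

open MeasureTheory in
lemma ENNReal.rpow_tsum_mul_le {ι : Type*} (w f : ι → ℝ≥0∞) {p : ℝ} (hp : 1 ≤ p) :
    (∑' i, w i * f i) ^ p ≤ (∑' i, w i * f i ^ p) * (∑' i, w i) ^ (p - 1) := by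
  rcases hp.eq_or_lt with rfl | hp
  · simp
  let _ : MeasurableSpace ι := ⊤
  have hmeas (g : ι → ℝ≥0∞) : AEMeasurable g Measure.count := measurable_from_top.aemeasurable
  set q := p.conjExponent
  have hpq : p.HolderConjugate q := .conjExponent hp
  have h := ENNReal.lintegral_mul_le_Lp_mul_Lq Measure.count hpq
    (f := fun i => w i ^ (1 / p) * f i) (g := fun i => w i ^ (1 / q)) (hmeas _) (hmeas _)
  simp only [lintegral_count, Pi.mul_apply] at h
  have e₁ (i : ι) : w i ^ (1 / p) * f i * w i ^ (1 / q) = w i * f i := by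
    rw [mul_right_comm, ← ENNReal.rpow_add_of_nonneg _ _ hpq.one_div_nonneg
      hpq.symm.one_div_nonneg, one_div, one_div, hpq.inv_add_inv_eq_one, ENNReal.rpow_one]
  have e₂ (i : ι) : (w i ^ (1 / p) * f i) ^ p = w i * f i ^ p := by
    rw [ENNReal.mul_rpow_of_nonneg _ _ hpq.nonneg, ← ENNReal.rpow_mul,
      one_div_mul_cancel hpq.ne_zero, ENNReal.rpow_one]
  have e₃ (i : ι) : (w i ^ (1 / q)) ^ q = w i := by
    rw [← ENNReal.rpow_mul, one_div_mul_cancel hpq.symm.ne_zero, ENNReal.rpow_one]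
  simp only [e₁, e₂, e₃] at h
  have h' := ENNReal.rpow_le_rpow h hpq.nonneg
  rwa [ENNReal.mul_rpow_of_nonneg _ _ hpq.nonneg, ← ENNReal.rpow_mul, ← ENNReal.rpow_mul,
    one_div_mul_cancel hpq.ne_zero, ENNReal.rpow_one, one_div, inv_mul_eq_div,
    hpq.div_conj_eq_sub_one] at h'

lemma ENNReal.tsum_rpow_tsum_mul_comp_le {ι κ : Type*} (w : κ → ℝ≥0∞) (f : ι → ℝ≥0∞)
    {s : κ → ι → ι} (hs : ∀ k, Function.Injective (s k)) {p : ℝ} (hp : 1 ≤ p) :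
    ∑' i, (∑' k, w k * f (s k i)) ^ p ≤ (∑' k, w k) ^ p * ∑' i, f i ^ p := by
  calc ∑' i, (∑' k, w k * f (s k i)) ^ p
      ≤ ∑' i, (∑' k, w k * f (s k i) ^ p) * (∑' k, w k) ^ (p - 1) :=
        ENNReal.tsum_le_tsum fun i => ENNReal.rpow_tsum_mul_le _ _ hp
    _ = (∑' k, w k * ∑' i, f (s k i) ^ p) * (∑' k, w k) ^ (p - 1) := by
        rw [ENNReal.tsum_mul_right, ENNReal.tsum_comm]
        simp_rw [ENNReal.tsum_mul_left]
    _ ≤ (∑' k, w k * ∑' i, f i ^ p) * (∑' k, w k) ^ (p - 1) := by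
        refine mul_le_mul_left (ENNReal.tsum_le_tsum fun k => mul_le_mul_right
          (ENNReal.tsum_comp_le_tsum_of_injective (hs k) _) _) _
    _ = (∑' k, w k) ^ p * ∑' i, f i ^ p := by
        have hW : (∑' k, w k) * (∑' k, w k) ^ (p - 1) = (∑' k, w k) ^ p := by
          conv_rhs => rw [← add_sub_cancel 1 p, ENNReal.rpow_add_of_nonneg _ _ zero_le_one
            (by linarith), ENNReal.rpow_one]
        rw [ENNReal.tsum_mul_right, mul_right_comm, hW]

lemma msize_add {d : ℕ} (α γ : Fin d → ℕ) : msize (α + γ) = msize α + msize γ := by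
  simp [msize, Finset.sum_add_distrib]

lemma tsum_pow_msize {d : ℕ} (a : ℝ≥0∞) :
    ∑' γ : Fin d → ℕ, a ^ msize γ = (1 - a)⁻¹ ^ d := by
  induction d with
  | zero => simp [msize]
  | succ n ih =>
    rw [← (Fin.consEquiv fun _ => ℕ).tsum_eq, ENNReal.tsum_prod', pow_succ', ← ih,
      ← ENNReal.tsum_geometric, ← ENNReal.tsum_mul_right]
    refine tsum_congr fun k => ?_
    rw [← ENNReal.tsum_mul_left]
    refine tsum_congr fun γ => ?_
    simp [msize, Fin.sum_univ_succ, pow_add]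

lemma choose_add_mul_pow_le {x : ℝ} (hx : 0 ≤ x) (n k : ℕ) :
    ((n + k).choose k : ℝ) * x ^ k ≤ (1 + x) ^ (n + k) := by
  rw [add_comm 1 x, add_pow]
  calc ((n + k).choose k : ℝ) * x ^ k = x ^ k * 1 ^ (n + k - k) * ((n + k).choose k : ℝ) := by
        ring
    _ ≤ ∑ j ∈ Finset.range (n + k + 1), x ^ j * 1 ^ (n + k - j) * ((n + k).choose j : ℝ) :=
        Finset.single_le_sum (f := fun j => x ^ j * 1 ^ (n + k - j) * ((n + k).choose j : ℝ))
          (fun j _ => by positivity) (Finset.mem_range.2 (by omega))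

lemma mchoose_add_mul_pow_le {d : ℕ} {x : ℝ} (hx : 0 ≤ x) (α γ : Fin d → ℕ) :
    (mchoose (α + γ) γ : ℝ) * x ^ msize γ ≤ (1 + x) ^ msize (α + γ) := by
  simp only [mchoose, msize, Nat.cast_prod, ← Finset.prod_pow_eq_pow_sum, ← Finset.prod_mul_distrib]
  exact Finset.prod_le_prod (fun i _ => by positivity)
    (fun i _ => choose_add_mul_pow_le hx (α i) (γ i))

lemma mchoose_mul_mchoose_mul_pow_le {d : ℕ} {r₁ r₂ A : ℝ} (hr₁ : 0 ≤ r₁) (hr₂ : 0 < r₂)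
    (hA₀ : 0 ≤ A) (hA₁ : A ≤ 1) (h : (1 + r₂) * r₁ ≤ A * r₂) (α β γ : Fin d → ℕ) :
    (mchoose (α + γ) γ * mchoose (β + γ) γ : ℝ) * r₁ ^ (msize (α + γ) + msize (β + γ))
      ≤ A ^ (2 * msize γ) * r₂ ^ (msize α + msize β) := by
  set S := msize (α + γ) + msize (β + γ)
  set g := msize γ
  have hS : S = msize α + msize β + 2 * g := by simp only [S, g, msize_add]; ring
  have hC : (mchoose (α + γ) γ * mchoose (β + γ) γ : ℝ) * r₂ ^ (2 * g) ≤ (1 + r₂) ^ S := by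
    calc (mchoose (α + γ) γ * mchoose (β + γ) γ : ℝ) * r₂ ^ (2 * g)
        = (mchoose (α + γ) γ * r₂ ^ g) * (mchoose (β + γ) γ * r₂ ^ g) := by ring
      _ ≤ (1 + r₂) ^ msize (α + γ) * (1 + r₂) ^ msize (β + γ) :=
          mul_le_mul (mchoose_add_mul_pow_le hr₂.le α γ) (mchoose_add_mul_pow_le hr₂.le β γ)
            (by positivity) (by positivity)
      _ = (1 + r₂) ^ S := (pow_add _ _ _).symm
  refine le_of_mul_le_mul_right ?_ (pow_pos hr₂ (2 * g))
  calc (mchoose (α + γ) γ * mchoose (β + γ) γ : ℝ) * r₁ ^ S * r₂ ^ (2 * g)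
      = ((mchoose (α + γ) γ * mchoose (β + γ) γ : ℝ) * r₂ ^ (2 * g)) * r₁ ^ S := by ring
    _ ≤ (1 + r₂) ^ S * r₁ ^ S := by gcongr
    _ ≤ (A * r₂) ^ S := by rw [← mul_pow]; gcongr
    _ ≤ A ^ (2 * g) * r₂ ^ S := by
        rw [mul_pow]
        exact mul_le_mul_of_nonneg_right (pow_le_pow_of_le_one hA₀ hA₁ (by omega)) (by positivity)
    _ = A ^ (2 * g) * r₂ ^ (msize α + msize β) * r₂ ^ (2 * g) := by rw [hS, pow_add]; ring

lemma sqrt_mchoose_mul_mchoose_mul_pow_le {d : ℕ} {r₁ r₂ A : ℝ} (hr₁ : 0 ≤ r₁) (hr₂ : 0 < r₂)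
    (hA₀ : 0 ≤ A) (hA₁ : A ≤ 1) (h : (1 + r₂) * r₁ ≤ A * r₂) (α β γ : Fin d → ℕ) :
    √((mchoose (α + γ) γ * mchoose (β + γ) γ : ℕ) : ℝ) * √r₁ ^ (msize (α + γ) + msize (β + γ))
      ≤ A ^ msize γ * √r₂ ^ (msize α + msize β) := by
  refine (pow_le_pow_iff_left₀ (by positivity) (by positivity) two_ne_zero).1 ?_
  rw [mul_pow, mul_pow, Real.sq_sqrt (Nat.cast_nonneg _), pow_right_comm _ _ 2,
    Real.sq_sqrt hr₁, pow_right_comm (√r₂) _ 2, Real.sq_sqrt hr₂.le, ← pow_mul, mul_comm _ 2]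
  push_cast
  exact mchoose_mul_mchoose_mul_pow_le hr₁ hr₂ hA₀ hA₁ h α β γ

lemma norm_T0starTerm_le {d : ℕ} {t : ℂ} (ht : ‖t‖ ≤ 1) {r₁ r₂ A : ℝ} (hr₁ : 0 < r₁)
    (hr₂ : 0 < r₂) (hA₀ : 0 ≤ A) (hA₁ : A ≤ 1) (h : (1 + r₂) * r₁ ≤ A * r₂)
    (b : ((Fin d → ℕ) × (Fin d → ℕ)) → ℂ) (q : (Fin d → ℕ) × (Fin d → ℕ)) (γ : Fin d → ℕ) :
    ‖T0starTerm t b q γ‖ ≤ √r₂ ^ (msize q.1 + msize q.2) *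
      (A ^ msize γ * (‖b (q + (γ, γ))‖ / √r₁ ^ (msize (q.1 + γ) + msize (q.2 + γ)))) := by
  have hw : 0 < √r₁ ^ (msize (q.1 + γ) + msize (q.2 + γ)) := by positivity
  calc ‖T0starTerm t b q γ‖
      = √((mchoose (q.1 + γ) γ * mchoose (q.2 + γ) γ : ℕ) : ℝ) * ‖t‖ ^ msize γ
          * ‖b (q + (γ, γ))‖ := by
        rw [T0starTerm, norm_mul, norm_mul, norm_pow, Complex.norm_real, Real.norm_eq_abs,
          abs_of_nonneg (Real.sqrt_nonneg _)]
        rfl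
    _ ≤ √((mchoose (q.1 + γ) γ * mchoose (q.2 + γ) γ : ℕ) : ℝ) * 1 * ‖b (q + (γ, γ))‖ := by
        gcongr
        exact pow_le_one₀ (norm_nonneg t) ht
    _ = (√((mchoose (q.1 + γ) γ * mchoose (q.2 + γ) γ : ℕ) : ℝ)
          * √r₁ ^ (msize (q.1 + γ) + msize (q.2 + γ)))
          * (‖b (q + (γ, γ))‖ / √r₁ ^ (msize (q.1 + γ) + msize (q.2 + γ))) := by
        field_simp
    _ ≤ (A ^ msize γ * √r₂ ^ (msize q.1 + msize q.2))
          * (‖b (q + (γ, γ))‖ / √r₁ ^ (msize (q.1 + γ) + msize (q.2 + γ))) :=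
        mul_le_mul_of_nonneg_right
          (sqrt_mchoose_mul_mchoose_mul_pow_le hr₁.le hr₂ hA₀ hA₁ h q.1 q.2 γ) (by positivity)
    _ = _ := by ring

def scaledNorm {d : ℕ} (r : ℝ) (b : ((Fin d → ℕ) × (Fin d → ℕ)) → ℂ)
    (q : (Fin d → ℕ) × (Fin d → ℕ)) : ℝ≥0∞ :=
  ENNReal.ofReal (‖b q‖ / √r ^ (msize q.1 + msize q.2))

lemma lpSum_eq_tsum_scaledNorm_rpow {d : ℕ} {p r : ℝ} (hp : 0 ≤ p) (hr : 0 < r)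
    (b : ((Fin d → ℕ) × (Fin d → ℕ)) → ℂ) :
    lpSum p r b = ∑' q, scaledNorm r b q ^ p := by
  refine tsum_congr fun q => ?_
  rw [scaledNorm, ENNReal.ofReal_rpow_of_nonneg (by positivity) hp,
    Real.div_rpow (norm_nonneg _) (by positivity), ← Real.rpow_natCast, Real.sqrt_eq_rpow,
    ← Real.rpow_mul hr.le, ← Real.rpow_mul hr.le, div_eq_mul_inv (_ ^ p), ← Real.rpow_neg hr.le]
  congr 3
  ring

lemma tsum_enorm_T0starTerm_le {d : ℕ} {t : ℂ} (ht : ‖t‖ ≤ 1) {r₁ r₂ A : ℝ} (hr₁ : 0 < r₁)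
    (hr₂ : 0 < r₂) (hA₀ : 0 ≤ A) (hA₁ : A ≤ 1) (h : (1 + r₂) * r₁ ≤ A * r₂)
    (b : ((Fin d → ℕ) × (Fin d → ℕ)) → ℂ) (q : (Fin d → ℕ) × (Fin d → ℕ)) :
    ∑' γ, ‖T0starTerm t b q γ‖ₑ ≤ ENNReal.ofReal (√r₂ ^ (msize q.1 + msize q.2)) *
      ∑' γ : Fin d → ℕ, ENNReal.ofReal A ^ msize γ * scaledNorm r₁ b (q + (γ, γ)) := by
  rw [← ENNReal.tsum_mul_left]
  refine ENNReal.tsum_le_tsum fun γ => ?_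
  rw [← ofReal_norm, scaledNorm, ← ENNReal.ofReal_pow hA₀, ← ENNReal.ofReal_mul (by positivity),
    ← ENNReal.ofReal_mul (by positivity)]
  exact ENNReal.ofReal_le_ofReal (norm_T0starTerm_le ht hr₁ hr₂ hA₀ hA₁ h b q γ)

lemma scaledNorm_T0star_le {d : ℕ} {t : ℂ} (ht : ‖t‖ ≤ 1) {r₁ r₂ A : ℝ} (hr₁ : 0 < r₁)
    (hr₂ : 0 < r₂) (hA₀ : 0 ≤ A) (hA₁ : A ≤ 1) (h : (1 + r₂) * r₁ ≤ A * r₂)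
    (b : ((Fin d → ℕ) × (Fin d → ℕ)) → ℂ) (q : (Fin d → ℕ) × (Fin d → ℕ)) :
    scaledNorm r₂ (T0star t b) q
      ≤ ∑' γ : Fin d → ℕ, ENNReal.ofReal A ^ msize γ * scaledNorm r₁ b (q + (γ, γ)) := by
  rw [scaledNorm, ENNReal.ofReal_div_of_pos (by positivity), ofReal_norm]
  exact ENNReal.div_le_of_le_mul'
    (enorm_tsum_le_tsum_enorm.trans (tsum_enorm_T0starTerm_le ht hr₁ hr₂ hA₀ hA₁ h b q))

lemma tsum_rpow_tsum_scaledNorm_shift_le {d : ℕ} {p r : ℝ} (hp : 1 ≤ p) (hr : 0 < r) (a : ℝ≥0∞)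
    (b : ((Fin d → ℕ) × (Fin d → ℕ)) → ℂ) :
    ∑' q, (∑' γ : Fin d → ℕ, a ^ msize γ * scaledNorm r b (q + (γ, γ))) ^ p
      ≤ (∑' γ : Fin d → ℕ, a ^ msize γ) ^ p * lpSum p r b := by
  rw [lpSum_eq_tsum_scaledNorm_rpow (by linarith) hr]
  exact ENNReal.tsum_rpow_tsum_mul_comp_le _ _ (fun γ => add_left_injective _) hp

lemma lpSum_T0star_le {d : ℕ} {p : ℝ} (hp : 1 ≤ p) {t : ℂ} (ht : ‖t‖ ≤ 1) {r₁ r₂ A : ℝ}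
    (hr₁ : 0 < r₁) (hr₂ : 0 < r₂) (hA₀ : 0 ≤ A) (hA₁ : A ≤ 1) (h : (1 + r₂) * r₁ ≤ A * r₂)
    (b : ((Fin d → ℕ) × (Fin d → ℕ)) → ℂ) :
    lpSum p r₂ (T0star t b)
      ≤ (∑' γ : Fin d → ℕ, ENNReal.ofReal A ^ msize γ) ^ p * lpSum p r₁ b := by
  rw [lpSum_eq_tsum_scaledNorm_rpow (by linarith) hr₂]
  exact (ENNReal.tsum_le_tsum fun q => ENNReal.rpow_le_rpow
    (scaledNorm_T0star_le ht hr₁ hr₂ hA₀ hA₁ h b q) (by linarith)).trans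
    (tsum_rpow_tsum_scaledNorm_shift_le hp hr₁ _ b)

lemma summable_norm_T0starTerm {d : ℕ} {p : ℝ} (hp : 1 ≤ p) {t : ℂ} (ht : ‖t‖ ≤ 1)
    {r₁ r₂ A : ℝ} (hr₁ : 0 < r₁) (hr₂ : 0 < r₂) (hA₀ : 0 ≤ A) (hA₁ : A ≤ 1)
    (h : (1 + r₂) * r₁ ≤ A * r₂) (hM : ∑' γ : Fin d → ℕ, ENNReal.ofReal A ^ msize γ ≠ ⊤)
    {b : ((Fin d → ℕ) × (Fin d → ℕ)) → ℂ} (hb : lpSum p r₁ b ≠ ⊤) (q : (Fin d → ℕ) × (Fin d → ℕ)) :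
    Summable fun γ => ‖T0starTerm t b q γ‖ := by
  set K := ∑' γ : Fin d → ℕ, ENNReal.ofReal A ^ msize γ * scaledNorm r₁ b (q + (γ, γ))
  have hK : K ^ p ≠ ⊤ := ((ENNReal.le_tsum q).trans
    (tsum_rpow_tsum_scaledNorm_shift_le hp hr₁ _ b)).trans_lt
    (mul_lt_top (rpow_lt_top_of_nonneg (by linarith) hM) hb.lt_top) |>.ne
  have hK' : K ≠ ⊤ := fun hK_top => hK (by rw [hK_top, ENNReal.top_rpow_of_pos (by linarith)])
  simpa using ENNReal.summable_toReal ((tsum_enorm_T0starTerm_le ht hr₁ hr₂ hA₀ hA₁ h b q).trans_lt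
    (mul_lt_top ofReal_lt_top hK'.lt_top)).ne

theorem stmt_8_general (d : ℕ) (p : ℝ) (hp : 1 < p) (t : ℂ)
    (ht : ‖t‖ ≤ 1) (r₁ r₂ : ℝ) (hr₁ : 0 < r₁) (hr₁' : r₁ < 1)
    (hr₂ : r₁ / (1 - r₁) < r₂) :
    ∃ C > (0:ℝ), ∀ b : ((Fin d → ℕ) × (Fin d → ℕ)) → ℂ,
      lpSum p r₁ b < ⊤ →
      (∀ q : (Fin d → ℕ) × (Fin d → ℕ),
          Summable (fun γ : Fin d → ℕ => ‖T0starTerm t b q γ‖)) ∧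
      lpSum p r₂ (T0star t b) ≤ ENNReal.ofReal (C ^ p) * lpSum p r₁ b := by
  have hr₂₀ : 0 < r₂ := (div_pos hr₁ (by linarith)).trans hr₂
  set A := (1 + r₂) * r₁ / r₂
  have hA₀ : 0 ≤ A := by positivity
  have hA₁ : A < 1 := by
    rw [div_lt_one hr₂₀]
    nlinarith [(div_lt_iff₀ (by linarith : 0 < 1 - r₁)).1 hr₂]
  have hA : (1 + r₂) * r₁ ≤ A * r₂ := (div_mul_cancel₀ _ hr₂₀.ne').ge
  set M := ∑' γ : Fin d → ℕ, ENNReal.ofReal A ^ msize γ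
  have hM_eq : M = (1 - ENNReal.ofReal A)⁻¹ ^ d := tsum_pow_msize _
  have hM : M ≠ ⊤ := by
    rw [hM_eq]
    exact pow_ne_top (inv_ne_top.2 (tsub_pos_of_lt (ofReal_lt_one.2 hA₁)).ne')
  have hM₁ : 1 ≤ M := by
    rw [hM_eq]
    exact one_le_pow₀ (ENNReal.one_le_inv.2 tsub_le_self)
  refine ⟨M.toReal, ENNReal.toReal_pos (one_pos.trans_le hM₁).ne' hM, fun b hb => ⟨?_, ?_⟩⟩
  · exact summable_norm_T0starTerm hp.le ht hr₁ hr₂₀ hA₀ hA₁.le hA hM hb.ne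
  · rw [← ENNReal.ofReal_rpow_of_nonneg toReal_nonneg (by linarith), ofReal_toReal hM]
    exact lpSum_T0star_le hp.le ht hr₁ hr₂₀ hA₀ hA₁.le hA b

/-- `T*_{0,t}` extends to a continuous map from `ℓ^p_{r₁}(ℕ^{2d})` to
`ℓ^p_{r₂}(ℕ^{2d})` when `|t| ≤ 1`, `0 < r₁ < 1` and `r₂ > r₁/(1−r₁)`, the defining
series being absolutely convergent. -/
theorem stmt_8 (d : ℕ) (hd : 1 ≤ d) (p : ℝ) (hp : 1 < p) (t : ℂ)
    (ht : ‖t‖ ≤ 1) (r₁ r₂ : ℝ) (hr₁ : 0 < r₁) (hr₁' : r₁ < 1)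
    (hr₂ : r₁ / (1 - r₁) < r₂) :
    ∃ C > (0:ℝ), ∀ b : ((Fin d → ℕ) × (Fin d → ℕ)) → ℂ,
      lpSum p r₁ b < ⊤ →
      (∀ q : (Fin d → ℕ) × (Fin d → ℕ),
          Summable (fun γ : Fin d → ℕ => ‖T0starTerm t b q γ‖)) ∧
      lpSum p r₂ (T0star t b) ≤ ENNReal.ofReal (C ^ p) * lpSum p r₁ b :=
  stmt_8_general d p hp t ht r₁ r₂ hr₁ hr₁' hr₂

end
end

section
/- Let d ≥ 1, 0 ≤ r < 1, and let a, a^{aw} : ℂ^d × ℂ^d → ℂ be wideparen-entire functions such that for every z ∈ ℂ^d the integral π^{−d} ∫_{ℂ^d} a(w₁,w₁) e^{−|z−w₁|²} dλ(w₁) converges absolutely and equals a^{aw}(z,z). If there is C > 0 with |a(w,w)| ≤ C e^{r|w|²} for all w ∈ ℂ^d, then there is C' > 0 such that |a^{aw}(z,w)| ≤ C' e^{r₀ |z+w|² − Re(z,w)} for all z, w ∈ ℂ^d, where r₀ = 1/(4(1−r)). -/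
open Finset MeasureTheory

noncomputable section

/-- The Hermitian pairing `(z,w) = Σⱼ zⱼ conj(wⱼ)` on `ℂ^d`. -/
def herm {d : ℕ} (z w : Fin d → ℂ) : ℂ := ∑ i, z i * (starRingEnd ℂ) (w i)

/-- `|z|² = Σⱼ |zⱼ|²` on `ℂ^d`. -/
def nsq {d : ℕ} (z : Fin d → ℂ) : ℝ := ∑ i, Complex.normSq (z i)

/-- A function `a : ℂ^d × ℂ^d → ℂ` is wideparen-entire if there is an entire
function `A` on `ℂ^{2d}` with `a(z,w) = A(z, w̄)` for all `z, w`. -/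
def WideparenEntire (d : ℕ) (a : (Fin d → ℂ) → (Fin d → ℂ) → ℂ) : Prop :=
  ∃ A : ((Fin d → ℂ) × (Fin d → ℂ)) → ℂ, AnalyticOnNhd ℂ A Set.univ ∧
    ∀ z w, a z w = A (z, fun i => (starRingEnd ℂ) (w i))


/-! The off-diagonal values of `a^{aw}` are determined by its diagonal values through analytic
continuation: along the complex line `t ↦ (u + t v, u + t̄ v)`, with `u = (z + w)/2` and
`v = (z - w)/(2i)`, both sides of the defining identity extend to entire functions of `t` that
agree for real `t`, hence at `t = i`. This yields
`a^{aw}(z,w) = π^{-d} ∫ a(x,x) e^{-(z-x, w-x)} dλ(x)`, and since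
`Re (z-x, w-x) = |x|² - Re (x, z+w) + Re (z,w)`, the growth bound on `a` reduces the estimate to
a Gaussian integral. -/

open Complex ComplexConjugate Metric Filter Topology

theorem differentiableAt_integral_of_dominated {α E : Type*} [MeasurableSpace α] {μ : Measure α}
    [NormedAddCommGroup E] [NormedSpace ℂ E] [CompleteSpace E] {F : ℂ → α → E} {t₀ : ℂ} {R : ℝ}
    {bound : α → ℝ} (hR : 0 < R) (hF_meas : ∀ t, AEStronglyMeasurable (F t) μ)
    (hF_diff : ∀ x, Differentiable ℂ (F · x))
    (h_bound : ∀ t ∈ closedBall t₀ R, ∀ x, ‖F t x‖ ≤ bound x) (h_int : Integrable bound μ) :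
    DifferentiableAt ℂ (fun t => ∫ x, F t x ∂μ) t₀ := by
  have hR2 : 0 < R / 2 := half_pos hR
  -- Cauchy's estimate on circles of radius `R/2` turns the bound on `F` into one on `∂ₜF`.
  have h_deriv_bound : ∀ x, ∀ t ∈ ball t₀ (R / 2), ‖deriv (F · x) t‖ ≤ bound x / (R / 2) := by
    intro x t ht
    refine Complex.norm_deriv_le_of_forall_mem_sphere_norm_le hR2 (hF_diff x).diffContOnCl
      fun ζ hζ => h_bound ζ ?_ x
    rw [mem_closedBall]
    linarith [dist_triangle ζ t t₀, mem_sphere.1 hζ, mem_ball.1 ht]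
  have h_slope : Tendsto (fun n : ℕ => ((n : ℂ) + 1)⁻¹) atTop (𝓝[≠] 0) := by
    refine tendsto_nhdsWithin_iff.2 ⟨?_, Eventually.of_forall fun n => ?_⟩
    · simpa using tendsto_one_div_add_atTop_nhds_zero_nat (𝕜 := ℂ)
    · exact inv_ne_zero (Nat.cast_add_one_ne_zero n)
  have h_deriv_meas : AEStronglyMeasurable (fun x => deriv (F · x) t₀) μ := by
    refine aestronglyMeasurable_of_tendsto_ae atTop
      (f := fun (n : ℕ) x => ((n : ℂ) + 1)⁻¹⁻¹ • (F (t₀ + ((n : ℂ) + 1)⁻¹) x - F t₀ x))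
      (fun n => ((hF_meas _).sub (hF_meas _)).const_smul _) (ae_of_all _ fun x => ?_)
    exact ((hF_diff x t₀).hasDerivAt.tendsto_slope_zero).comp h_slope
  exact (hasDerivAt_integral_of_dominated_loc_of_deriv_le (ball_mem_nhds t₀ hR2)
    (Eventually.of_forall hF_meas)
    (h_int.mono' (hF_meas t₀) (ae_of_all _ (h_bound t₀ (mem_closedBall_self hR.le))))
    h_deriv_meas (ae_of_all _ fun x t ht => h_deriv_bound x t ht) (h_int.div_const _)
    (ae_of_all _ fun x t _ => (hF_diff x t).hasDerivAt)).2.differentiableAt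

theorem Differentiable.eq_of_forall_ofReal_eq {f g : ℂ → ℂ} (hf : Differentiable ℂ f)
    (hg : Differentiable ℂ g) (hfg : ∀ τ : ℝ, f τ = g τ) : f = g := by
  have h_ofReal : Tendsto ((↑) : ℝ → ℂ) (𝓝[≠] 0) (𝓝[≠] 0) :=
    continuous_ofReal.continuousWithinAt.tendsto_nhdsWithin fun τ hτ => by simpa using hτ
  exact (Complex.analyticOnNhd_univ_iff_differentiable.2 hf).eq_of_frequently_eq
    (Complex.analyticOnNhd_univ_iff_differentiable.2 hg)
    (h_ofReal.frequently (Frequently.of_forall hfg))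

theorem norm_mul_cexp_neg_le {c y : ℂ} {B L : ℝ} (hc : ‖c‖ ≤ B) (hL : L ≤ y.re) :
    ‖c * cexp (-y)‖ ≤ B * Real.exp (-L) := by
  rw [norm_mul, norm_exp, neg_re]
  exact mul_le_mul hc (Real.exp_le_exp.2 (by linarith)) (Real.exp_nonneg _)
    ((norm_nonneg c).trans hc)

theorem integral_exp_neg_mul_normSq_add_re {b : ℝ} (hb : 0 < b) (s : ℂ) :
    Integrable (fun ζ : ℂ => Real.exp (-b * normSq ζ + (ζ * conj s).re)) ∧
    ∫ ζ : ℂ, Real.exp (-b * normSq ζ + (ζ * conj s).re) =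
      Real.pi / b * Real.exp (normSq s / (4 * b)) := by
  have hb' : 0 < (b : ℂ).re := by simpa using hb
  have h_ofReal : ∀ ζ : ℂ, cexp (-(b : ℂ) * ‖ζ‖ ^ 2 + 1 * inner ℝ s ζ) =
      (Real.exp (-b * normSq ζ + (ζ * conj s).re) : ℂ) := fun ζ => by
    rw [Complex.inner, normSq_eq_norm_sq]; push_cast; ring_nf
  have hint := GaussianFourier.integrable_cexp_neg_mul_sq_norm_add hb' 1 s
  have hval := GaussianFourier.integral_cexp_neg_mul_sq_norm_add hb' 1 s
  simp only [h_ofReal, Complex.finrank_real_complex] at hint hval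
  refine ⟨hint.re, ?_⟩
  rw [integral_complex_ofReal, show ((2 : ℕ) : ℂ) / 2 = 1 by norm_num, cpow_one, one_pow,
    one_mul] at hval
  rw [normSq_eq_norm_sq]
  exact_mod_cast hval

section Hermitian

variable {d : ℕ}

theorem herm_self (x : Fin d → ℂ) : herm x x = nsq x := by
  simp [herm, nsq, Complex.mul_conj]

@[fun_prop]
theorem Continuous.herm {X : Type*} [TopologicalSpace X] {f g : X → Fin d → ℂ}
    (hf : Continuous f) (hg : Continuous g) : Continuous fun x => herm (f x) (g x) := by
  unfold _root_.herm
  fun_prop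

@[fun_prop]
theorem Continuous.nsq {X : Type*} [TopologicalSpace X] {f : X → Fin d → ℂ}
    (hf : Continuous f) : Continuous fun x => nsq (f x) := by
  unfold _root_.nsq
  fun_prop

theorem re_herm_sub_sub (z w x : Fin d → ℂ) :
    (herm (z - x) (w - x)).re = (herm z w).re - (herm x (z + w)).re + nsq x := by
  simp only [herm, nsq, re_sum, ← Finset.sum_sub_distrib, ← Finset.sum_add_distrib]
  refine Finset.sum_congr rfl fun i _ => ?_
  simp only [Pi.sub_apply, Pi.add_apply, map_sub, map_add, mul_re, sub_re, add_re, sub_im, add_im,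
    conj_re, conj_im, normSq_apply]
  ring

theorem re_herm_le {ε : ℝ} (hε : 0 < ε) (a b : Fin d → ℂ) :
    (herm a b).re ≤ ε * nsq a + nsq b / (4 * ε) := by
  simp only [herm, nsq, re_sum, Finset.mul_sum, Finset.sum_div, ← Finset.sum_add_distrib]
  refine Finset.sum_le_sum fun i _ => ?_
  have h_re : (a i * conj (b i)).re ≤ ‖a i‖ * ‖b i‖ := by
    simpa using re_le_norm (a i * conj (b i))
  have h_amgm : 4 * ε * (‖a i‖ * ‖b i‖) ≤ 4 * ε * (ε * ‖a i‖ ^ 2) + ‖b i‖ ^ 2 := by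
    nlinarith [sq_nonneg (2 * ε * ‖a i‖ - ‖b i‖)]
  rw [normSq_eq_norm_sq, normSq_eq_norm_sq, add_div' _ _ _ (by positivity),
    le_div_iff₀ (by positivity)]
  nlinarith

theorem re_herm_sub_sub_ge {ε : ℝ} (hε : 0 < ε) (p q x : Fin d → ℂ) :
    (1 - ε) * nsq x - (|(herm p q).re| + nsq (p + q) / (4 * ε)) ≤ (herm (p - x) (q - x)).re := by
  rw [re_herm_sub_sub]
  linarith [re_herm_le hε x (p + q), neg_abs_le (herm p q).re]

theorem integral_exp_neg_mul_nsq_add_re_herm {b : ℝ} (hb : 0 < b) (s : Fin d → ℂ) :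
    Integrable (fun x : Fin d → ℂ => Real.exp (-b * nsq x + (herm x s).re)) ∧
    ∫ x : Fin d → ℂ, Real.exp (-b * nsq x + (herm x s).re) =
      (Real.pi / b) ^ d * Real.exp (nsq s / (4 * b)) := by
  have h_prod : (fun x : Fin d → ℂ => Real.exp (-b * nsq x + (herm x s).re)) =
      fun x => ∏ i, Real.exp (-b * normSq (x i) + (x i * conj (s i)).re) := by
    ext x
    simp only [nsq, herm, re_sum, Finset.mul_sum, ← Finset.sum_add_distrib, Real.exp_sum]
  rw [h_prod]
  refine ⟨Integrable.fintype_prod fun i => (integral_exp_neg_mul_normSq_add_re hb (s i)).1, ?_⟩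
  rw [integral_fintype_prod_volume_eq_prod
    (fun i ζ => Real.exp (-b * normSq ζ + (ζ * conj (s i)).re))]
  simp only [(integral_exp_neg_mul_normSq_add_re hb _).2, Finset.prod_mul_distrib,
    Finset.prod_const, Finset.card_univ, Fintype.card_fin, ← Real.exp_sum, nsq, Finset.sum_div]

end Hermitian

section WickIntegral

variable {d : ℕ} {g : (Fin d → ℂ) → ℂ} {r C : ℝ}

theorem differentiable_integral_mul_cexp_neg_herm (hg : AEStronglyMeasurable g) (hr : r < 1)
    (hgC : ∀ x, ‖g x‖ ≤ C * Real.exp (r * nsq x)) {P Q : ℂ → Fin d → ℂ} (hP : Continuous P)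
    (hQ : Continuous Q) (hPQ : ∀ x, Differentiable ℂ fun t => herm (P t - x) (Q t - x)) :
    Differentiable ℂ fun t => ∫ x, g x * cexp (-herm (P t - x) (Q t - x)) := by
  intro t₀
  set ε := (1 - r) / 2 with hε_def
  have hε : 0 < ε := by linarith
  obtain ⟨K, hK⟩ := (isCompact_closedBall t₀ 1).exists_bound_of_continuousOn
    (f := fun t => |(herm (P t) (Q t)).re| + nsq (P t + Q t) / (4 * ε))
    (by fun_prop)
  have h_gauss : Integrable fun x : Fin d → ℂ => Real.exp (-ε * nsq x) := by
    simpa [herm] using (integral_exp_neg_mul_nsq_add_re_herm hε (0 : Fin d → ℂ)).1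
  refine differentiableAt_integral_of_dominated one_pos
    (fun t => hg.mul (by fun_prop : Continuous _).aestronglyMeasurable)
    (fun x => ((hPQ x).neg.cexp).const_mul (g x))
    (fun t ht x => (norm_mul_cexp_neg_le (hgC x) (re_herm_sub_sub_ge hε _ _ x)).trans ?_)
    (h_gauss.const_mul (C * Real.exp K))
  have hCx : 0 ≤ C * Real.exp (r * nsq x) := (norm_nonneg _).trans (hgC x)
  have hKt := (le_abs_self _).trans (hK t ht)
  calc C * Real.exp (r * nsq x) *
        Real.exp (-((1 - ε) * nsq x - (|(herm (P t) (Q t)).re| + nsq (P t + Q t) / (4 * ε))))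
      ≤ C * Real.exp (r * nsq x) * Real.exp (-((1 - ε) * nsq x - K)) := by gcongr
    _ = C * Real.exp K * Real.exp (-ε * nsq x) := by
      rw [mul_assoc, ← Real.exp_add, mul_assoc, ← Real.exp_add, hε_def]; ring_nf

theorem eq_integral_mul_cexp_neg_herm_of_diag {A : (Fin d → ℂ) × (Fin d → ℂ) → ℂ} (hA : Differentiable ℂ A)
    (hg : AEStronglyMeasurable g) (hr : r < 1) (hgC : ∀ x, ‖g x‖ ≤ C * Real.exp (r * nsq x))
    (hdiag : ∀ p, A (p, star p) = ∫ x, g x * cexp (-herm (p - x) (p - x))) (z w : Fin d → ℂ) :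
    A (z, star w) = ∫ x, g x * cexp (-herm (z - x) (w - x)) := by
  set u : Fin d → ℂ := (2 : ℂ)⁻¹ • (z + w)
  set v : Fin d → ℂ := (2 * I)⁻¹ • (z - w)
  set P : ℂ → Fin d → ℂ := fun t => u + t • v with hP_def
  have hP : Continuous P := by fun_prop
  have hP_conj : ∀ t, star (P (conj t)) = star u + t • star v := fun t => by
    simp [hP_def, star_smul]
  have hΦ : Differentiable ℂ fun t => A (P t, star (P (conj t))) := by
    simp_rw [hP_conj]
    exact hA.comp (by fun_prop)
  have hΨ : Differentiable ℂ fun t => ∫ x, g x * cexp (-herm (P t - x) (P (conj t) - x)) := by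
    refine differentiable_integral_mul_cexp_neg_herm hg hr hgC hP
      (hP.comp continuous_conj) fun x => ?_
    simp only [herm, hP_def, Pi.sub_apply, Pi.add_apply, Pi.smul_apply, smul_eq_mul, map_sub,
      map_add, map_mul, conj_conj]
    fun_prop
  have h_eq := hΦ.eq_of_forall_ofReal_eq hΨ fun τ => by simpa only [conj_ofReal] using hdiag _
  have hI : I * (2 * I)⁻¹ = (2 : ℂ)⁻¹ := by field_simp
  have hPI : P I = z := by
    simp only [hP_def, u, v, smul_smul, hI]
    module
  have hP_negI : P (-I) = w := by
    simp only [hP_def, u, v, smul_smul, neg_mul, hI]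
    module
  simpa [hPI, hP_negI] using congrFun h_eq I

theorem norm_integral_mul_cexp_neg_herm_le (hr : r < 1)
    (hgC : ∀ x, ‖g x‖ ≤ C * Real.exp (r * nsq x)) (z w : Fin d → ℂ) :
    ‖∫ x, g x * cexp (-herm (z - x) (w - x))‖ ≤
      C * (Real.pi / (1 - r)) ^ d * Real.exp (nsq (z + w) / (4 * (1 - r)) - (herm z w).re) := by
  have h_gauss := integral_exp_neg_mul_nsq_add_re_herm (sub_pos.2 hr) (z + w)
  calc ‖∫ x, g x * cexp (-herm (z - x) (w - x))‖
      ≤ ∫ x, C * Real.exp (-(herm z w).re) *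
          Real.exp (-(1 - r) * nsq x + (herm x (z + w)).re) := by
        refine norm_integral_le_of_norm_le (h_gauss.1.const_mul _) (ae_of_all _ fun x => ?_)
        refine (norm_mul_cexp_neg_le (hgC x) (re_herm_sub_sub z w x).ge).trans_eq ?_
        rw [mul_assoc, ← Real.exp_add, mul_assoc, ← Real.exp_add]
        ring_nf
    _ = C * (Real.pi / (1 - r)) ^ d * Real.exp (nsq (z + w) / (4 * (1 - r)) - (herm z w).re) := by
        rw [integral_const_mul, h_gauss.2, Real.exp_sub, Real.exp_neg]
        ring

end WickIntegral

theorem stmt_13_general (d : ℕ) (r : ℝ) (hr1 : r < 1)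
    (a aaw : (Fin d → ℂ) → (Fin d → ℂ) → ℂ)
    (haaw : WideparenEntire d aaw)
    (hint : ∀ z : Fin d → ℂ,
      Integrable (fun w₁ : Fin d → ℂ =>
        a w₁ w₁ * (Real.exp (-(nsq (z - w₁))) : ℂ)) ∧
      aaw z z = ((Real.pi : ℂ) ^ d)⁻¹ *
        ∫ w₁ : Fin d → ℂ, a w₁ w₁ * (Real.exp (-(nsq (z - w₁))) : ℂ))
    (hbound : ∃ C > (0:ℝ), ∀ w : Fin d → ℂ,
      ‖a w w‖ ≤ C * Real.exp (r * nsq w)) :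
    ∃ C' > (0:ℝ), ∀ z w : Fin d → ℂ,
      ‖aaw z w‖ ≤
        C' * Real.exp ((1 / (4 * (1 - r))) * nsq (z + w) - (herm z w).re) := by
  obtain ⟨A, hA, haaw_eq⟩ := haaw
  obtain ⟨C, hC, ha_le⟩ := hbound
  set g : (Fin d → ℂ) → ℂ := fun x => ((Real.pi : ℂ) ^ d)⁻¹ * a x x
  have hg : AEStronglyMeasurable g := by
    have h_exp : Continuous fun x : Fin d → ℂ => (Real.exp (nsq (0 - x)) : ℂ) := by fun_prop
    refine ((((hint 0).1.aestronglyMeasurable.mul h_exp.aestronglyMeasurable).const_mul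
      ((Real.pi : ℂ) ^ d)⁻¹).congr (ae_of_all _ fun x => ?_))
    simp [g, mul_assoc, ← Complex.exp_add]
  have hgC : ∀ x, ‖g x‖ ≤ C / Real.pi ^ d * Real.exp (r * nsq x) := fun x => by
    simpa [g, div_eq_inv_mul, mul_assoc, abs_of_pos Real.pi_pos] using
      mul_le_mul_of_nonneg_left (ha_le x) (by positivity : (0 : ℝ) ≤ (Real.pi ^ d)⁻¹)
  have hdiag : ∀ p, A (p, star p) = ∫ x, g x * cexp (-herm (p - x) (p - x)) := fun p => by
    simp_rw [herm_self, ← ofReal_neg, ← ofReal_exp, g, mul_assoc, integral_const_mul]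
    exact (haaw_eq p p).symm.trans (hint p).2
  refine ⟨C / (1 - r) ^ d, by have := sub_pos.2 hr1; positivity, fun z w => ?_⟩
  rw [haaw_eq z w]
  refine ((congrArg norm (eq_integral_mul_cexp_neg_herm_of_diag (differentiableOn_univ.1 hA.differentiableOn)
    hg hr1 hgC hdiag z w)).trans_le (norm_integral_mul_cexp_neg_herm_le hr1 hgC z w)).trans_eq ?_
  rw [div_pow]
  field_simp

/-- if `a^{aw}` is the Wick symbol of the anti-Wick operator with symbol
`a`, and `|a(w,w)| ≤ C e^{r|w|²}` with `0 ≤ r < 1`, then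
`|a^{aw}(z,w)| ≤ C' e^{r₀|z+w|² − Re(z,w)}` with `r₀ = 1/(4(1−r))`. -/
theorem stmt_13 (d : ℕ) (hd : 1 ≤ d) (r : ℝ) (hr0 : 0 ≤ r) (hr1 : r < 1)
    (a aaw : (Fin d → ℂ) → (Fin d → ℂ) → ℂ)
    (ha : WideparenEntire d a) (haaw : WideparenEntire d aaw)
    (hint : ∀ z : Fin d → ℂ,
      Integrable (fun w₁ : Fin d → ℂ =>
        a w₁ w₁ * (Real.exp (-(nsq (z - w₁))) : ℂ)) ∧
      aaw z z = ((Real.pi : ℂ) ^ d)⁻¹ *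
        ∫ w₁ : Fin d → ℂ, a w₁ w₁ * (Real.exp (-(nsq (z - w₁))) : ℂ))
    (hbound : ∃ C > (0:ℝ), ∀ w : Fin d → ℂ,
      ‖a w w‖ ≤ C * Real.exp (r * nsq w)) :
    ∃ C' > (0:ℝ), ∀ z w : Fin d → ℂ,
      ‖aaw z w‖ ≤
        C' * Real.exp ((1 / (4 * (1 - r))) * nsq (z + w) - (herm z w).re) :=
  stmt_13_general d r hr1 a aaw haaw hint hbound
end
end

section
/- Let d ≥ 1, s ≥ 1/2, 0 < t₀ < 3/4 and set t₁ = (1−t₀)/(3−4t₀). Suppose b : ℂ^d × ℂ^d → ℂ is wideparen-entire and satisfies: for every r > 0 there is C_r > 0 with |b(z,w)| ≤ C_r e^{(1/4)|z−w|² + r|z+w|^{1/s}} for all z, w. Suppose F : ℂ^d → ℂ is entire and satisfies: for every r > 0 there is C_r > 0 with |F(z)| ≤ C_r e^{t₀|z|² + r|z|^{1/s}} for all z. Then for every z ∈ ℂ^d the integral G(z) := π^{−d} ∫_{ℂ^d} b(z,w) F(w) e^{(z,w) − |w|²} dλ(w) (the Wick operator Op_𝔙(b) applied to F) converges absolutely,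 and for every r > 0 there is C'_r > 0 such that |G(z)| ≤ C'_r e^{t₁|z|² + r|z|^{1/s}} for all z ∈ ℂ^d. -/
open Finset MeasureTheory

noncomputable section

/-!
Write `X = |z|`, `Y = |w|`, `κ = 3 - 4 t₀` and `t₁ = (1 - t₀) / κ`. The growth bounds on `b` and
`F`, together with `Re (z,w) ≤ XY`, bound the modulus of the integrand by `exp` of
`t₁ X² - (κ/4) (Y - X/κ)²` (a completed square) plus the subquadratic terms
`r' (|z + w|^{1/s} + Y^{1/s})`. As `1/s ≤ 2`, a small `r'` lets `r X^{1/s}` and half of the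
Gaussian in `Y - X/κ` absorb them. What is left is a Gaussian in `|w|` concentrated near the
sphere `|w| = X/κ`; its integral grows only polynomially in `X`, hence slower than any
`exp (r X^{1/s})`.
-/

lemma nsq_nonneg {d : ℕ} (z : Fin d → ℂ) : 0 ≤ nsq z :=
  sum_nonneg fun _ _ => Complex.normSq_nonneg _

lemma continuous_nsq {d : ℕ} : Continuous (nsq (d := d)) := by
  unfold nsq
  fun_prop

lemma continuous_herm {d : ℕ} (z : Fin d → ℂ) : Continuous (herm z) := by
  unfold herm
  fun_prop

lemma sqrt_nsq_eq_norm_toLp {d : ℕ} (z : Fin d → ℂ) : √(nsq z) = ‖WithLp.toLp 2 z‖ := by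
  simp [EuclideanSpace.norm_eq, nsq, Complex.normSq_eq_norm_sq]

lemma herm_eq_inner_toLp {d : ℕ} (z w : Fin d → ℂ) :
    herm z w = inner ℂ (WithLp.toLp 2 w) (WithLp.toLp 2 z) := by
  simp [PiLp.inner_apply, herm]

lemma norm_le_sqrt_nsq {d : ℕ} (w : Fin d → ℂ) : ‖w‖ ≤ √(nsq w) := by
  rw [sqrt_nsq_eq_norm_toLp]
  exact (pi_norm_le_iff_of_nonneg (norm_nonneg _)).2 fun i => PiLp.norm_apply_le (WithLp.toLp 2 w) i

lemma sqrt_nsq_add_le {d : ℕ} (z w : Fin d → ℂ) : √(nsq (z + w)) ≤ √(nsq z) + √(nsq w) := by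
  simp only [sqrt_nsq_eq_norm_toLp, WithLp.toLp_add]
  exact norm_add_le _ _

lemma re_herm_le_s15 {d : ℕ} (z w : Fin d → ℂ) : (herm z w).re ≤ √(nsq z) * √(nsq w) := by
  rw [herm_eq_inner_toLp, sqrt_nsq_eq_norm_toLp, sqrt_nsq_eq_norm_toLp, mul_comm]
  exact (Complex.re_le_norm _).trans (norm_inner_le_norm _ _)

lemma nsq_sub {d : ℕ} (z w : Fin d → ℂ) : nsq (z - w) = nsq z - 2 * (herm z w).re + nsq w := by
  simp only [nsq, herm, Pi.sub_apply, Complex.normSq_sub, Complex.re_sum, sum_add_distrib,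
    sum_sub_distrib, mul_sum]
  ring

lemma add_rpow_le_two_rpow_mul_add_rpow {x y p : ℝ} (hx : 0 ≤ x) (hy : 0 ≤ y) (hp : 0 ≤ p) :
    (x + y) ^ p ≤ 2 ^ p * (x ^ p + y ^ p) := calc
  (x + y) ^ p ≤ (2 * max x y) ^ p := by gcongr; linarith [le_max_left x y, le_max_right x y]
  _ = 2 ^ p * max (x ^ p) (y ^ p) := by
    rw [Real.mul_rpow zero_le_two (hx.trans (le_max_left _ _)), Real.rpow_max hx hy hp]
  _ ≤ 2 ^ p * (x ^ p + y ^ p) := by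
    gcongr
    exact max_le_add_of_nonneg (Real.rpow_nonneg hx p) (Real.rpow_nonneg hy p)

lemma rpow_le_rpow_add_one {u p q : ℝ} (hu : 0 ≤ u) (hp : 0 ≤ p) (hpq : p ≤ q) :
    u ^ p ≤ u ^ q + 1 := by
  rcases le_or_gt u 1 with h | h
  · linarith [Real.rpow_le_one hu h hp, Real.rpow_nonneg hu q]
  · linarith [Real.rpow_le_rpow_of_exponent_le h.le hpq]

lemma exists_pow_le_mul_exp_rpow {δ p : ℝ} (hδ : 0 < δ) (hp : 0 < p) (n : ℕ) :
    ∃ C > 0, ∀ X, 0 ≤ X → X ^ n ≤ C * Real.exp (δ * X ^ p) := by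
  set m := ⌈n / p⌉₊
  refine ⟨m.factorial / δ ^ m + 1, by positivity, fun X hX => ?_⟩
  have hXp : 0 ≤ X ^ p := Real.rpow_nonneg hX p
  have hpow : X ^ n ≤ (X ^ p) ^ m + 1 := by
    have h := rpow_le_rpow_add_one hXp (div_nonneg n.cast_nonneg hp.le) (Nat.le_ceil (n / p))
    rwa [← Real.rpow_mul hX, mul_div_cancel₀ _ hp.ne', Real.rpow_natCast,
      Real.rpow_natCast] at h
  have hfac : (X ^ p) ^ m ≤ m.factorial / δ ^ m * Real.exp (δ * X ^ p) := by
    have h := Real.pow_div_factorial_le_exp _ (mul_nonneg hδ.le hXp) m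
    rw [mul_pow, div_le_iff₀ (by positivity)] at h
    rw [div_mul_eq_mul_div, le_div_iff₀ (by positivity)]
    linarith
  have hone : 1 ≤ Real.exp (δ * X ^ p) := Real.one_le_exp (by positivity)
  nlinarith

lemma exists_mul_rpow_add_rpow_le {p a c r : ℝ} (hp : 0 ≤ p) (hp2 : p ≤ 2) (ha : 0 < a)
    (hc : 0 ≤ c) (hr : 0 < r) :
    ∃ r' > 0, ∀ X Y, 0 ≤ X → 0 ≤ Y →
      r' * ((X + Y) ^ p + Y ^ p) ≤ r * X ^ p + a * ((Y - c * X) ^ 2 + 1) := by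
  have hK : 0 < 2 * 2 ^ p * (1 + c) ^ p := by positivity
  have hc1 : 1 ≤ (1 + c) ^ p := Real.one_le_rpow (by linarith) hp
  refine ⟨min r a / (2 * 2 ^ p * (1 + c) ^ p), by positivity, fun X Y hX hY => ?_⟩
  set r' := min r a / (2 * 2 ^ p * (1 + c) ^ p)
  have hr'K : r' * (2 * 2 ^ p * (1 + c) ^ p) = min r a := div_mul_cancel₀ _ hK.ne'
  set u := |Y - c * X|
  have hu : 0 ≤ u := abs_nonneg _
  -- `X + Y` and `Y` are both at most `(1 + c) X + |Y - c X|`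
  have hV : (X + Y) ^ p + Y ^ p ≤ 2 * 2 ^ p * ((1 + c) ^ p * X ^ p + (u ^ 2 + 1)) := by
    have hYu : Y ≤ c * X + u := by linarith [le_abs_self (Y - c * X)]
    have h1 : (X + Y) ^ p ≤ ((1 + c) * X + u) ^ p :=
      Real.rpow_le_rpow (by positivity) (by linarith) hp
    have h2 : Y ^ p ≤ ((1 + c) * X + u) ^ p := Real.rpow_le_rpow hY (by nlinarith) hp
    have h3 := add_rpow_le_two_rpow_mul_add_rpow (by positivity : 0 ≤ (1 + c) * X) hu hp
    rw [Real.mul_rpow (by linarith) hX] at h3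
    have h4 : u ^ p ≤ u ^ 2 + 1 := by simpa using rpow_le_rpow_add_one hu hp hp2
    have h2p : (0 : ℝ) ≤ 2 ^ p := by positivity
    nlinarith
  have hXp : 0 ≤ X ^ p := Real.rpow_nonneg hX p
  have hu2 : u ^ 2 = (Y - c * X) ^ 2 := sq_abs _
  calc r' * ((X + Y) ^ p + Y ^ p)
      ≤ r' * (2 * 2 ^ p * ((1 + c) ^ p * X ^ p + (u ^ 2 + 1))) := by gcongr
    _ ≤ min r a * X ^ p + min r a * (u ^ 2 + 1) := by
      nlinarith [mul_le_mul_of_nonneg_left hc1 (by positivity : 0 ≤ r' * (2 * 2 ^ p))]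
    _ ≤ r * X ^ p + a * ((Y - c * X) ^ 2 + 1) := by
      rw [hu2]; gcongr <;> simp

lemma integrable_exp_neg_mul_normSq {β : ℝ} (hβ : 0 < β) :
    Integrable fun z : ℂ => Real.exp (-β * Complex.normSq z) := by
  rw [← (Complex.volume_preserving_equiv_real_prod.symm).integrable_comp_emb
    Complex.measurableEquivRealProd.symm.measurableEmbedding]
  refine ((integrable_exp_neg_mul_sq hβ).mul_prod (integrable_exp_neg_mul_sq hβ)).congr
    (.of_forall fun x => ?_)
  simp only [Function.comp_apply, Complex.measurableEquivRealProd_symm_apply, Complex.normSq_apply,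
    ← Real.exp_add]
  ring_nf

lemma integrable_exp_neg_mul_nsq {d : ℕ} {β : ℝ} (hβ : 0 < β) :
    Integrable fun w : Fin d → ℂ => Real.exp (-β * nsq w) := by
  simp only [nsq, mul_sum, Real.exp_sum]
  exact Integrable.fintype_prod fun _ => integrable_exp_neg_mul_normSq hβ

def shellGaussian {d : ℕ} (β R : ℝ) (w : Fin d → ℂ) : ℝ := Real.exp (-β * (√(nsq w) - R) ^ 2)

lemma shellGaussian_nonneg {d : ℕ} (β R : ℝ) (w : Fin d → ℂ) : 0 ≤ shellGaussian β R w :=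
  Real.exp_nonneg _

lemma continuous_shellGaussian {d : ℕ} (β R : ℝ) : Continuous (shellGaussian (d := d) β R) := by
  unfold shellGaussian
  have := continuous_nsq (d := d)
  fun_prop

lemma shellGaussian_le {d : ℕ} {β R : ℝ} (hβ : 0 ≤ β) (w : Fin d → ℂ) :
    shellGaussian β R w ≤
      (Metric.closedBall 0 (2 * R)).indicator 1 w + Real.exp (-(β / 4) * nsq w) := by
  set Y := √(nsq w)
  by_cases hY : Y ≤ 2 * R
  · have hw : w ∈ Metric.closedBall 0 (2 * R) := by
      rw [mem_closedBall_zero_iff]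
      exact (norm_le_sqrt_nsq w).trans hY
    rw [Set.indicator_of_mem hw, Pi.one_apply]
    have : shellGaussian β R w ≤ 1 := Real.exp_le_one_iff.2 (by nlinarith)
    linarith [Real.exp_nonneg (-(β / 4) * nsq w)]
  · -- outside the ball, `|w| - R ≥ |w| / 2`
    have hY2 : Y ^ 2 = nsq w := Real.sq_sqrt (nsq_nonneg w)
    have hYR : nsq w / 4 ≤ (Y - R) ^ 2 := by nlinarith [Real.sqrt_nonneg (nsq w)]
    have : shellGaussian β R w ≤ Real.exp (-(β / 4) * nsq w) :=
      Real.exp_le_exp.2 (by nlinarith [mul_le_mul_of_nonneg_left hYR hβ])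
    exact le_add_of_nonneg_of_le (Set.indicator_nonneg (fun _ _ => zero_le_one) w) this

lemma integrable_shellGaussian {d : ℕ} {β : ℝ} (hβ : 0 < β) (R : ℝ) :
    Integrable (shellGaussian (d := d) β R) := by
  have hdom : Integrable fun w : Fin d → ℂ =>
      (Metric.closedBall 0 (2 * R)).indicator 1 w + Real.exp (-(β / 4) * nsq w) :=
    ((integrableOn_const measure_closedBall_lt_top.ne).integrable_indicator
      measurableSet_closedBall).add (integrable_exp_neg_mul_nsq (by positivity))
  refine hdom.mono' (continuous_shellGaussian β R).aestronglyMeasurable (.of_forall fun w => ?_)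
  rw [Real.norm_of_nonneg (shellGaussian_nonneg β R w)]
  exact shellGaussian_le hβ.le w

lemma integral_shellGaussian_le {d : ℕ} {β R : ℝ} (hβ : 0 < β) (hR : 0 ≤ R) :
    ∫ w, shellGaussian (d := d) β R w ≤
      (2 * R) ^ Module.finrank ℝ (Fin d → ℂ) * (volume (Metric.ball (0 : Fin d → ℂ) 1)).toReal +
        ∫ w : Fin d → ℂ, Real.exp (-(β / 4) * nsq w) := by
  have hind : Integrable ((Metric.closedBall (0 : Fin d → ℂ) (2 * R)).indicator 1) :=
    (integrableOn_const (C := (1 : ℝ)) measure_closedBall_lt_top.ne).integrable_indicator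
      measurableSet_closedBall
  have hgauss := integrable_exp_neg_mul_nsq (d := d) (β := β / 4) (by positivity)
  calc ∫ w, shellGaussian β R w
      ≤ ∫ w, ((Metric.closedBall 0 (2 * R)).indicator 1 w + Real.exp (-(β / 4) * nsq w)) :=
        integral_mono (integrable_shellGaussian hβ R) (hind.add hgauss) (shellGaussian_le hβ.le)
    _ = _ := by
      rw [integral_add hind hgauss, integral_indicator_one measurableSet_closedBall,
        Measure.real, Measure.addHaar_closedBall _ _ (by positivity), ENNReal.toReal_mul,
        ENNReal.toReal_ofReal (by positivity)]

lemma exists_integral_shellGaussian_le {d : ℕ} {β c δ p : ℝ} (hβ : 0 < β) (hc : 0 ≤ c)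
    (hδ : 0 < δ) (hp : 0 < p) :
    ∃ C > 0, ∀ X, 0 ≤ X → ∫ w, shellGaussian (d := d) β (c * X) w ≤ C * Real.exp (δ * X ^ p) := by
  set n := Module.finrank ℝ (Fin d → ℂ)
  set B := (volume (Metric.ball (0 : Fin d → ℂ) 1)).toReal
  set G := ∫ w : Fin d → ℂ, Real.exp (-(β / 4) * nsq w)
  have hG : 0 ≤ G := integral_nonneg fun _ => Real.exp_nonneg _
  obtain ⟨C₁, hC₁, hpow⟩ := exists_pow_le_mul_exp_rpow hδ hp n
  refine ⟨(2 * c) ^ n * B * C₁ + G + 1, by positivity, fun X hX => ?_⟩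
  have hexp : 1 ≤ Real.exp (δ * X ^ p) := Real.one_le_exp (by positivity)
  have hXn : (2 * c) ^ n * B * X ^ n ≤ (2 * c) ^ n * B * (C₁ * Real.exp (δ * X ^ p)) := by
    gcongr
    exact hpow X hX
  calc ∫ w, shellGaussian β (c * X) w ≤ (2 * (c * X)) ^ n * B + G :=
        integral_shellGaussian_le hβ (by positivity)
    _ = (2 * c) ^ n * B * X ^ n + G := by ring
    _ ≤ ((2 * c) ^ n * B * C₁ + G + 1) * Real.exp (δ * X ^ p) := by nlinarith

lemma quadratic_exponent_le {d : ℕ} {t₀ : ℝ} (ht₀ : t₀ ≠ 3 / 4) (z w : Fin d → ℂ) :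
    (1 / 4) * nsq (z - w) + (herm z w).re + (t₀ - 1) * nsq w ≤
      (1 - t₀) / (3 - 4 * t₀) * nsq z -
        (3 - 4 * t₀) / 4 * (√(nsq w) - (3 - 4 * t₀)⁻¹ * √(nsq z)) ^ 2 := by
  have hκ : (3 - 4 * t₀) * (3 - 4 * t₀)⁻¹ = 1 := mul_inv_cancel₀ fun h => ht₀ (by linarith)
  have hX := Real.sq_sqrt (nsq_nonneg z)
  have hY := Real.sq_sqrt (nsq_nonneg w)
  set X := √(nsq z)
  set Y := √(nsq w)
  -- completing the square in `Y = |w|`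
  have hsq : (1 - t₀) / (3 - 4 * t₀) * X ^ 2 - (3 - 4 * t₀) / 4 * (Y - (3 - 4 * t₀)⁻¹ * X) ^ 2 =
      (1 / 4) * X ^ 2 + (1 / 2) * (X * Y) - (3 - 4 * t₀) / 4 * Y ^ 2 := by
    rw [div_eq_mul_inv]
    linear_combination (-(1 / 4) * X ^ 2 * (3 - 4 * t₀)⁻¹ + (1 / 4) * X ^ 2 + (1 / 2) * X * Y) * hκ
  rw [← hX, hsq, nsq_sub, ← hX, ← hY]
  linarith [re_herm_le_s15 z w]

/-- The integrand of `Op_𝔙(b) F (z)`. -/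
def wickIntegrand {d : ℕ} (b : (Fin d → ℂ) → (Fin d → ℂ) → ℂ) (F : (Fin d → ℂ) → ℂ)
    (z w : Fin d → ℂ) : ℂ :=
  b z w * F w * Complex.exp (herm z w - (nsq w : ℂ))

lemma norm_wickIntegrand {d : ℕ} (b : (Fin d → ℂ) → (Fin d → ℂ) → ℂ) (F : (Fin d → ℂ) → ℂ)
    (z w : Fin d → ℂ) :
    ‖wickIntegrand b F z w‖ = ‖b z w‖ * ‖F w‖ * Real.exp ((herm z w).re - nsq w) := by
  simp [wickIntegrand, Complex.norm_exp]

lemma WideparenEntire.continuous_apply {d : ℕ} {b : (Fin d → ℂ) → (Fin d → ℂ) → ℂ}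
    (hb : WideparenEntire d b) (z : Fin d → ℂ) : Continuous (b z) := by
  obtain ⟨A, hA, hbA⟩ := hb
  rw [show b z = fun w => A (z, fun i => (starRingEnd ℂ) (w i)) from funext (hbA z)]
  exact hA.continuous.comp (by fun_prop)

lemma continuous_wickIntegrand {d : ℕ} {b : (Fin d → ℂ) → (Fin d → ℂ) → ℂ}
    {F : (Fin d → ℂ) → ℂ} (hb : WideparenEntire d b) (hF : Continuous F) (z : Fin d → ℂ) :
    Continuous (wickIntegrand b F z) := by
  have := continuous_nsq (d := d)
  have := continuous_herm z
  have := hb.continuous_apply z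
  unfold wickIntegrand
  fun_prop

lemma exists_norm_wickIntegrand_le {d : ℕ} {p t₀ r : ℝ} (hp : 0 ≤ p) (hp2 : p ≤ 2)
    (ht₀ : t₀ < 3 / 4) {b : (Fin d → ℂ) → (Fin d → ℂ) → ℂ}
    (hbb : ∀ r > (0:ℝ), ∃ C > (0:ℝ), ∀ z w : Fin d → ℂ,
      ‖b z w‖ ≤ C * Real.exp ((1/4) * nsq (z - w) + r * √(nsq (z + w)) ^ p))
    {F : (Fin d → ℂ) → ℂ}
    (hFb : ∀ r > (0:ℝ), ∃ C > (0:ℝ), ∀ z : Fin d → ℂ,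
      ‖F z‖ ≤ C * Real.exp (t₀ * nsq z + r * √(nsq z) ^ p))
    (hr : 0 < r) :
    ∃ M > 0, ∀ z w, ‖wickIntegrand b F z w‖ ≤
      M * Real.exp ((1 - t₀) / (3 - 4 * t₀) * nsq z + r * √(nsq z) ^ p) *
        shellGaussian ((3 - 4 * t₀) / 8) ((3 - 4 * t₀)⁻¹ * √(nsq z)) w := by
  set κ := 3 - 4 * t₀
  have hκ : 0 < κ := by linarith
  obtain ⟨r', hr', habsorb⟩ :=
    exists_mul_rpow_add_rpow_le hp hp2 (by positivity : 0 < κ / 8) (inv_nonneg.2 hκ.le) hr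
  obtain ⟨Cb, hCb, hb⟩ := hbb r' hr'
  obtain ⟨CF, hCF, hF⟩ := hFb r' hr'
  refine ⟨Cb * CF * Real.exp (κ / 8), by positivity, fun z w => ?_⟩
  rw [norm_wickIntegrand, shellGaussian]
  set X := √(nsq z)
  set Y := √(nsq w)
  have hexponent : (1/4) * nsq (z - w) + r' * √(nsq (z + w)) ^ p + (t₀ * nsq w + r' * Y ^ p) +
      ((herm z w).re - nsq w) ≤
      (1 - t₀) / κ * nsq z + r * X ^ p + κ / 8 - κ / 8 * (Y - κ⁻¹ * X) ^ 2 := by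
    have hadd : r' * √(nsq (z + w)) ^ p ≤ r' * (X + Y) ^ p := by
      gcongr
      exact sqrt_nsq_add_le z w
    linarith [quadratic_exponent_le ht₀.ne z w,
      habsorb X Y (Real.sqrt_nonneg _) (Real.sqrt_nonneg _)]
  calc ‖b z w‖ * ‖F w‖ * Real.exp ((herm z w).re - nsq w)
      ≤ Cb * Real.exp ((1/4) * nsq (z - w) + r' * √(nsq (z + w)) ^ p) *
          (CF * Real.exp (t₀ * nsq w + r' * Y ^ p)) * Real.exp ((herm z w).re - nsq w) := by
        gcongr
        exacts [hb z w, hF w]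
    _ ≤ Cb * CF * Real.exp ((1 - t₀) / κ * nsq z + r * X ^ p + κ / 8 -
          κ / 8 * (Y - κ⁻¹ * X) ^ 2) := by
        simp only [mul_assoc, mul_left_comm _ CF, ← Real.exp_add]
        gcongr
    _ = _ := by
        simp only [mul_assoc, ← Real.exp_add]
        ring_nf

theorem stmt_15_general (d : ℕ) (s : ℝ) (hs : 1/2 ≤ s) (t₀ : ℝ)
    (ht₀' : t₀ < 3/4)
    (b : (Fin d → ℂ) → (Fin d → ℂ) → ℂ) (hb : WideparenEntire d b)
    (hbb : ∀ r > (0:ℝ), ∃ C > (0:ℝ), ∀ z w : Fin d → ℂ,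
      ‖b z w‖ ≤
        C * Real.exp ((1/4) * nsq (z - w) + r * Real.sqrt (nsq (z + w)) ^ ((1:ℝ)/s)))
    (F : (Fin d → ℂ) → ℂ) (hF : AnalyticOnNhd ℂ F Set.univ)
    (hFb : ∀ r > (0:ℝ), ∃ C > (0:ℝ), ∀ z : Fin d → ℂ,
      ‖F z‖ ≤
        C * Real.exp (t₀ * nsq z + r * Real.sqrt (nsq z) ^ ((1:ℝ)/s))) :
    (∀ z : Fin d → ℂ,
      Integrable (fun w : Fin d → ℂ =>
        b z w * F w * Complex.exp (herm z w - (nsq w : ℂ)))) ∧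
    (∀ r > (0:ℝ), ∃ C' > (0:ℝ), ∀ z : Fin d → ℂ,
      ‖(((Real.pi : ℂ) ^ d)⁻¹ *
          ∫ w : Fin d → ℂ, b z w * F w * Complex.exp (herm z w - (nsq w : ℂ)))‖ ≤
        C' * Real.exp (((1 - t₀) / (3 - 4 * t₀)) * nsq z +
          r * Real.sqrt (nsq z) ^ ((1:ℝ)/s))) := by
  have hp : 0 < 1 / s := by positivity
  have hp2 : 1 / s ≤ 2 := by rw [div_le_iff₀ (by linarith)]; linarith
  have hβ : 0 < (3 - 4 * t₀) / 8 := by linarith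
  have hc : 0 ≤ (3 - 4 * t₀)⁻¹ := inv_nonneg.2 (by linarith)
  obtain ⟨M₁, -, hM₁⟩ := exists_norm_wickIntegrand_le hp.le hp2 ht₀' hbb hFb one_pos
  have hint : ∀ z, Integrable (wickIntegrand b F z) := fun z =>
    ((integrable_shellGaussian hβ _).const_mul _).mono'
      (continuous_wickIntegrand hb hF.continuous z).aestronglyMeasurable (.of_forall (hM₁ z))
  refine ⟨hint, fun r hr => ?_⟩
  obtain ⟨M, hM, hbound⟩ := exists_norm_wickIntegrand_le hp.le hp2 ht₀' hbb hFb (half_pos hr)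
  obtain ⟨C, hC, hgauss⟩ := exists_integral_shellGaussian_le (d := d) hβ hc (half_pos hr) hp
  refine ⟨(Real.pi ^ d)⁻¹ * M * C, by positivity, fun z => ?_⟩
  set E := Real.exp ((1 - t₀) / (3 - 4 * t₀) * nsq z + r / 2 * √(nsq z) ^ (1 / s))
  have hnorm : ‖∫ w, wickIntegrand b F z w‖ ≤
      M * E * ∫ w : Fin d → ℂ, shellGaussian ((3 - 4 * t₀) / 8) ((3 - 4 * t₀)⁻¹ * √(nsq z)) w := by
    rw [← integral_const_mul]
    exact norm_integral_le_of_norm_le ((integrable_shellGaussian hβ _).const_mul _)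
      (.of_forall (hbound z))
  calc ‖((Real.pi : ℂ) ^ d)⁻¹ * ∫ w, wickIntegrand b F z w‖
      ≤ (Real.pi ^ d)⁻¹ * (M * E * (C * Real.exp (r / 2 * √(nsq z) ^ (1 / s)))) := by
        rw [norm_mul, norm_inv, norm_pow, Complex.norm_real, Real.norm_of_nonneg Real.pi_pos.le]
        gcongr
        exact hnorm.trans (by gcongr; exact hgauss _ (Real.sqrt_nonneg _))
    _ = _ := by
        rw [mul_mul_mul_comm, ← Real.exp_add]
        ring_nf

/-- continuity of a Wick operator with symbol satisfying
`|b(z,w)| ≲ e^{(1/4)|z−w|² + r|z+w|^{1/s}}` on functions with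
`|F(z)| ≲ e^{t₀|z|² + r|z|^{1/s}}`, with gain `t₁ = (1−t₀)/(3−4t₀)`. -/
theorem stmt_15 (d : ℕ) (hd : 1 ≤ d) (s : ℝ) (hs : 1/2 ≤ s) (t₀ : ℝ)
    (ht₀ : 0 < t₀) (ht₀' : t₀ < 3/4)
    (b : (Fin d → ℂ) → (Fin d → ℂ) → ℂ) (hb : WideparenEntire d b)
    (hbb : ∀ r > (0:ℝ), ∃ C > (0:ℝ), ∀ z w : Fin d → ℂ,
      ‖b z w‖ ≤
        C * Real.exp ((1/4) * nsq (z - w) + r * Real.sqrt (nsq (z + w)) ^ ((1:ℝ)/s)))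
    (F : (Fin d → ℂ) → ℂ) (hF : AnalyticOnNhd ℂ F Set.univ)
    (hFb : ∀ r > (0:ℝ), ∃ C > (0:ℝ), ∀ z : Fin d → ℂ,
      ‖F z‖ ≤
        C * Real.exp (t₀ * nsq z + r * Real.sqrt (nsq z) ^ ((1:ℝ)/s))) :
    (∀ z : Fin d → ℂ,
      Integrable (fun w : Fin d → ℂ =>
        b z w * F w * Complex.exp (herm z w - (nsq w : ℂ)))) ∧
    (∀ r > (0:ℝ), ∃ C' > (0:ℝ), ∀ z : Fin d → ℂ,
      ‖(((Real.pi : ℂ) ^ d)⁻¹ *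
          ∫ w : Fin d → ℂ, b z w * F w * Complex.exp (herm z w - (nsq w : ℂ)))‖ ≤
        C' * Real.exp (((1 - t₀) / (3 - 4 * t₀)) * nsq z +
          r * Real.sqrt (nsq z) ^ ((1:ℝ)/s))) :=
  stmt_15_general d s hs t₀ ht₀' b hb hbb F hF hFb

end
end

section
/- Let d ≥ 1, α, β ∈ ℕ^d and z, w ∈ ℂ^d. Then the integral π^{−d} ∫_{ℂ^d} w₁^α · (w̄₁)^β · e^{−(z−w₁, w−w₁)} dλ(w₁) converges absolutely and equals Σ_{γ ≤ α, γ ≤ β} C(α,γ) C(β,γ) γ! · z^{α−γ} · (w̄)^{β−γ}. In particular (α = β = 0): π^{−d} ∫_{ℂ^d} e^{−(z−w₁, w−w₁)} dλ(w₁) = 1. -/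
/-!
The exponential `e^{-(z-w₁, w-w₁)}` factors over the coordinates, so the integral is a product of
one-dimensional integrals `I(a, b) = ∫_ℂ u^a ū^b e^{-(ζ-u)(ω̄-ū)} dλ(u)`. These are integrable
(polynomial times Gaussian), and the integral of a Wirtinger derivative of such a function
vanishes. Applied to `u^a ū^b e^{-(ζ-u)(ω̄-ū)}`, the `∂/∂ū`- and `∂/∂u`-derivatives give
`I(a+1, b) = ζ I(a, b) + b I(a, b-1)` and `I(a, b+1) = ω̄ I(a, b) + a I(a-1, b)`. With the Gaussian
integral `I(0, 0) = π` these recursions pin down `I(a, b) = π Σ_c C(a,c) C(b,c) c! ζ^{a-c} ω̄^{b-c}`,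
and expanding the product of these sums over the coordinates gives the multi-index sum.
-/

open Finset MeasureTheory

noncomputable section

/-- Monomial `z^α = ∏ᵢ zᵢ^{αᵢ}` on `ℂ^d`. -/
def mpow {d : ℕ} (z : Fin d → ℂ) (α : Fin d → ℕ) : ℂ := ∏ i, z i ^ α i

open scoped Nat ComplexConjugate

section BinomialSum

variable {R : Type*} [CommRing R]

def binomialSum (p q : R) (a b : ℕ) : R :=
  ∑ c ∈ range (a + 1), (a.choose c * b.choose c * c ! : R) * p ^ (a - c) * q ^ (b - c)

theorem binomialSum_zero_left (p q : R) (b : ℕ) : binomialSum p q 0 b = q ^ b := by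
  simp [binomialSum]

theorem Nat.choose_succ_mul_factorial_succ (b c : ℕ) :
    b.choose (c + 1) * (c + 1)! = b * ((b - 1).choose c * c !) := by
  cases b with
  | zero => simp
  | succ n =>
    rw [Nat.factorial_succ, ← mul_assoc, ← Nat.add_one_mul_choose_eq]
    simp [mul_assoc]

theorem binomialSum_succ_left (p q : R) (a b : ℕ) :
    binomialSum p q (a + 1) b = p * binomialSum p q a b + b * binomialSum p q a (b - 1) := by
  have hp : p * binomialSum p q a b = ∑ c ∈ range (a + 2),
      (a.choose c * b.choose c * c ! : R) * p ^ (a + 1 - c) * q ^ (b - c) := by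
    rw [sum_range_succ, Nat.choose_succ_self, binomialSum, mul_sum]
    simp only [Nat.cast_zero, zero_mul, add_zero]
    refine sum_congr rfl fun c hc => ?_
    rw [Nat.sub_add_comm (Nat.lt_succ_iff.mp (mem_range.mp hc)), pow_succ]
    ring
  rw [hp, binomialSum, sum_range_succ', sum_range_succ' _ (a + 1), binomialSum, mul_sum,
    add_right_comm _ _ (∑ i ∈ range (a + 1), _), ← sum_add_distrib]
  congr 1
  · refine sum_congr rfl fun c _ => ?_
    have h := congrArg (Nat.cast : ℕ → R) (Nat.choose_succ_mul_factorial_succ b c)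
    push_cast at h
    rw [Nat.choose_succ_succ', Nat.add_sub_add_right, Nat.sub_sub, add_comm 1 c]
    push_cast
    linear_combination (↑(a.choose c) * p ^ (a - c) * q ^ (b - (c + 1))) * h
  · simp

theorem prod_binomialSum {d : ℕ} (p q : Fin d → ℂ) (α β : Fin d → ℕ) :
    ∏ i, binomialSum (p i) (q i) (α i) (β i) =
      ∑ γ ∈ Iic α ∩ Iic β,
        (mchoose α γ : ℂ) * (mchoose β γ : ℂ) * (mfact γ : ℂ) *
          mpow p (α - γ) * mpow q (β - γ) := by
  classical
  have hIic : Fintype.piFinset (fun i => range (α i + 1)) = Iic α := by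
    simp_rw [Nat.range_succ_eq_Iic]; rfl
  have hinter : Iic α ∩ Iic β = {γ ∈ Iic α | γ ≤ β} := by
    ext γ; simp
  simp only [binomialSum]
  rw [prod_univ_sum, hIic, hinter, sum_filter_of_ne]
  · refine sum_congr rfl fun γ _ => ?_
    simp only [mchoose, mfact, mpow, Nat.cast_prod, Pi.sub_apply, ← prod_mul_distrib]
  · intro γ _ hγ i
    by_contra hi
    have hβγ : mchoose β γ = 0 :=
      prod_eq_zero (mem_univ i) (Nat.choose_eq_zero_of_lt (not_le.mp hi))
    exact hγ (by simp [hβγ])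

end BinomialSum

section GaussianBound

variable {V : Type*} [NormedAddCommGroup V] [InnerProductSpace ℝ V] [FiniteDimensional ℝ V]
  [MeasurableSpace V] [BorelSpace V]

theorem integrable_pow_norm_mul_exp_sub_sq (k : ℕ) (c : ℝ) :
    Integrable (fun v : V => ‖v‖ ^ k * Real.exp (c * ‖v‖ - ‖v‖ ^ 2)) := by
  have hgauss : Integrable (fun v : V => Real.exp (-‖v‖ ^ 2 / 2)) := by
    refine (GaussianFourier.integrable_cexp_neg_mul_sq_norm_add (b := 1 / 2) (by norm_num) 0
      (0 : V)).norm.congr (Filter.Eventually.of_forall fun v => ?_)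
    have hexponent :
        -(1 / 2 : ℂ) * ‖v‖ ^ 2 + 0 * inner ℝ (0 : V) v = ((-‖v‖ ^ 2 / 2 : ℝ) : ℂ) := by
      push_cast
      ring
    simp only [hexponent, Complex.norm_exp_ofReal]
  refine (hgauss.const_mul (k ! * Real.exp ((c + 1) ^ 2 / 2))).mono'
    (by fun_prop : Continuous _).aestronglyMeasurable (Filter.Eventually.of_forall fun v => ?_)
  set r := ‖v‖
  have hpow : r ^ k ≤ k ! * Real.exp r := by
    have := Real.pow_div_factorial_le_exp r (norm_nonneg v) k
    rwa [div_le_iff₀ (by positivity), mul_comm] at this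
  have hexp : Real.exp r * Real.exp (c * r - r ^ 2) ≤
      Real.exp ((c + 1) ^ 2 / 2) * Real.exp (-r ^ 2 / 2) := by
    rw [← Real.exp_add, ← Real.exp_add, Real.exp_le_exp]
    nlinarith [sq_nonneg (r - (c + 1))]
  rw [Real.norm_of_nonneg (by positivity)]
  calc r ^ k * Real.exp (c * r - r ^ 2) ≤ k ! * Real.exp r * Real.exp (c * r - r ^ 2) := by
        gcongr
    _ ≤ k ! * Real.exp ((c + 1) ^ 2 / 2) * Real.exp (-r ^ 2 / 2) := by
        rw [mul_assoc, mul_assoc]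
        gcongr

end GaussianBound

section ComplexGaussian

open Complex

def gaussMonomial (ζ ω : ℂ) (a b : ℕ) (u : ℂ) : ℂ :=
  u ^ a * conj u ^ b * cexp (-((ζ - u) * conj (ω - u)))

theorem continuous_gaussMonomial (ζ ω : ℂ) (a b : ℕ) : Continuous (gaussMonomial ζ ω a b) := by
  unfold gaussMonomial
  fun_prop

theorem re_neg_mul_conj_sub_le (ζ ω u : ℂ) :
    (-((ζ - u) * conj (ω - u))).re ≤ ‖ζ‖ * ‖ω‖ + (‖ζ‖ + ‖ω‖) * ‖u‖ - ‖u‖ ^ 2 := by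
  have hexpand : -((ζ - u) * conj (ω - u)) =
      -(ζ * conj ω) + ζ * conj u + u * conj ω - u * conj u := by
    rw [map_sub]; ring
  have h1 := (abs_le.mp (abs_re_le_norm (ζ * conj ω))).1
  have h2 := re_le_norm (ζ * conj u)
  have h3 := re_le_norm (u * conj ω)
  simp only [norm_mul, RCLike.norm_conj] at h1 h2 h3
  rw [hexpand, sub_re, add_re, add_re, neg_re, mul_conj, ofReal_re,
    Complex.normSq_eq_norm_sq]
  linarith

theorem norm_gaussMonomial_le (ζ ω : ℂ) (a b : ℕ) (u : ℂ) :
    ‖gaussMonomial ζ ω a b u‖ ≤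
      Real.exp (‖ζ‖ * ‖ω‖) * (‖u‖ ^ (a + b) * Real.exp ((‖ζ‖ + ‖ω‖) * ‖u‖ - ‖u‖ ^ 2)) := by
  rw [gaussMonomial, norm_mul, norm_mul, norm_pow, norm_pow, RCLike.norm_conj, norm_exp,
    ← pow_add, mul_left_comm, ← Real.exp_add]
  gcongr
  linarith [re_neg_mul_conj_sub_le ζ ω u]

theorem integrable_gaussMonomial (ζ ω : ℂ) (a b : ℕ) : Integrable (gaussMonomial ζ ω a b) :=
  ((integrable_pow_norm_mul_exp_sub_sq (a + b) (‖ζ‖ + ‖ω‖)).const_mul _).mono'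
    (continuous_gaussMonomial ζ ω a b).aestronglyMeasurable
    (Filter.Eventually.of_forall (norm_gaussMonomial_le ζ ω a b))

theorem integral_eq_zero_of_hasFDerivAt_wirtinger {F A B : ℂ → ℂ} (hF : Integrable F)
    (hA : Integrable A) (hB : Integrable B)
    (hderiv : ∀ u,
      HasFDerivAt F (A u • ContinuousLinearMap.id ℝ ℂ + B u • (conjCLE : ℂ →L[ℝ] ℂ)) u) :
    ∫ u, A u = 0 ∧ ∫ u, B u = 0 := by
  have hline : ∀ v : ℂ, (∫ u, A u) * v + (∫ u, B u) * conj v = 0 := by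
    intro v
    have h := integral_bilinear_hasFDerivAt_right_eq_neg_left_of_integrable
      (μ := volume) (f := fun _ => (1 : ℂ)) (f' := fun _ => 0) (v := v)
      (B := ContinuousLinearMap.mul ℝ ℂ) (by simp)
      (by simpa [Pi.add_def] using (hA.mul_const v).add (hB.mul_const (conj v)))
      (by simpa using hF) (fun x _ => hasFDerivAt_const 1 x) (fun x _ => hderiv x)
    rw [← integral_mul_const, ← integral_mul_const,
      ← integral_add (hA.mul_const v) (hB.mul_const _)]
    simpa using h
  have h1 := hline 1
  have hI := hline I
  simp only [map_one, mul_one, conj_I] at h1 hI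
  constructor
  · linear_combination h1 / 2 - I / 2 * hI + ((∫ u, A u) - ∫ u, B u) / 2 * I_sq
  · linear_combination h1 / 2 + I / 2 * hI + ((∫ u, B u) - ∫ u, A u) / 2 * I_sq

theorem hasFDerivAt_gaussMonomial (ζ ω : ℂ) (a b : ℕ) (u : ℂ) :
    HasFDerivAt (gaussMonomial ζ ω a b)
      ((a * gaussMonomial ζ ω (a - 1) b u + conj ω * gaussMonomial ζ ω a b u
          - gaussMonomial ζ ω a (b + 1) u) • ContinuousLinearMap.id ℝ ℂ
        + (b * gaussMonomial ζ ω a (b - 1) u + ζ * gaussMonomial ζ ω a b u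
          - gaussMonomial ζ ω (a + 1) b u) • (conjCLE : ℂ →L[ℝ] ℂ)) u := by
  have hconj : HasFDerivAt (conj : ℂ → ℂ) (conjCLE : ℂ →L[ℝ] ℂ) u := conjCLE.hasFDerivAt
  have hpow := hasFDerivAt_pow (𝕜 := ℝ) a (x := u)
  have hconjpow := hconj.pow b
  have hexponent := (((hasFDerivAt_id u).const_sub ζ).mul
    (conjCLE.hasFDerivAt.comp u ((hasFDerivAt_id u).const_sub ω))).neg
  refine ((hpow.mul hconjpow).mul hexponent.cexp).congr_fderiv ?_
  ext1 v
  simp only [gaussMonomial, Pi.mul_apply, Pi.neg_apply, Function.comp_apply, id_eq, map_sub,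
    ContinuousLinearMap.comp_neg, ContinuousLinearMap.comp_id, smul_neg, neg_add_rev, neg_neg,
    smul_add, nsmul_eq_mul, add_apply, smul_apply, ContinuousLinearMap.id_apply, smul_eq_mul,
    ContinuousLinearEquiv.coe_coe, ContinuousAlgEquiv.coe_coeCLE, ContinuousAlgEquiv.coeCLE_apply,
    conjCAE_apply]
  ring

theorem integral_gaussMonomial_succ (ζ ω : ℂ) (a b : ℕ) :
    (∫ u, gaussMonomial ζ ω (a + 1) b u) =
        ζ * (∫ u, gaussMonomial ζ ω a b u) + b * ∫ u, gaussMonomial ζ ω a (b - 1) u ∧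
      (∫ u, gaussMonomial ζ ω a (b + 1) u) =
        conj ω * (∫ u, gaussMonomial ζ ω a b u) + a * ∫ u, gaussMonomial ζ ω (a - 1) b u := by
  have hint := integrable_gaussMonomial ζ ω
  obtain ⟨hdz, hdzbar⟩ := integral_eq_zero_of_hasFDerivAt_wirtinger
    (A := fun u => a * gaussMonomial ζ ω (a - 1) b u + conj ω * gaussMonomial ζ ω a b u
      - gaussMonomial ζ ω a (b + 1) u)
    (B := fun u => b * gaussMonomial ζ ω a (b - 1) u + ζ * gaussMonomial ζ ω a b u
      - gaussMonomial ζ ω (a + 1) b u) (hint a b)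
    (by fun_prop) (by fun_prop)
    (hasFDerivAt_gaussMonomial ζ ω a b)
  rw [integral_sub, integral_add, integral_const_mul, integral_const_mul] at hdz hdzbar
  · exact ⟨by linear_combination -hdzbar, by linear_combination -hdz⟩
  all_goals fun_prop

theorem integral_gaussMonomial_zero_zero (ζ ω : ℂ) :
    ∫ u, gaussMonomial ζ ω 0 0 u = Real.pi := by
  have hcoord : ∀ v : Fin 2 → ℝ, gaussMonomial ζ ω 0 0 (measurableEquivPi.symm v) =
      cexp (-(ζ * conj ω)) *
        cexp (-1 * ∑ i, (v i : ℂ) ^ 2 + ∑ i, ![ζ + conj ω, I * (conj ω - ζ)] i * v i) := by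
    intro v
    simp only [measurableEquivPi_symm_apply, gaussMonomial, pow_zero, one_mul, ← Complex.exp_add,
      Fin.sum_univ_two, Matrix.cons_val_zero, Matrix.cons_val_one, map_sub, map_add, map_mul,
      conj_ofReal, conj_I]
    congr 1
    linear_combination (v 1 : ℂ) ^ 2 * I_sq
  rw [← volume_preserving_equiv_pi.symm.integral_comp']
  simp_rw [hcoord]
  rw [integral_const_mul, GaussianFourier.integral_cexp_neg_mul_sum_add (by norm_num)]
  have hexponent : (∑ i, ![ζ + conj ω, I * (conj ω - ζ)] i ^ 2) / (4 * 1) = ζ * conj ω := by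
    rw [Fin.sum_univ_two]
    simp only [Matrix.cons_val_zero, Matrix.cons_val_one]
    linear_combination (conj ω - ζ) ^ 2 / 4 * I_sq
  rw [hexponent, Fintype.card_fin, div_one, Nat.cast_ofNat, div_self two_ne_zero, cpow_one,
    mul_left_comm, ← Complex.exp_add, neg_add_cancel, Complex.exp_zero, mul_one]

theorem integral_gaussMonomial (ζ ω : ℂ) (a b : ℕ) :
    ∫ u, gaussMonomial ζ ω a b u = Real.pi * binomialSum ζ (conj ω) a b := by
  induction a generalizing b with
  | zero =>
    induction b with
    | zero => simp [integral_gaussMonomial_zero_zero, binomialSum_zero_left]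
    | succ b ih =>
      rw [(integral_gaussMonomial_succ ζ ω 0 b).2, ih, binomialSum_zero_left,
        binomialSum_zero_left, Nat.cast_zero, zero_mul, add_zero, pow_succ]
      ring
  | succ a ih =>
    rw [(integral_gaussMonomial_succ ζ ω a b).1, ih, ih, binomialSum_succ_left]
    ring

end ComplexGaussian

theorem mpow_mul_mpow_conj_mul_exp_neg_herm (d : ℕ) (α β : Fin d → ℕ) (z w w₁ : Fin d → ℂ) :
    mpow w₁ α * mpow (fun i => conj (w₁ i)) β * Complex.exp (-(herm (z - w₁) (w - w₁))) =
      ∏ i, gaussMonomial (z i) (w i) (α i) (β i) (w₁ i) := by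
  simp only [mpow, herm, gaussMonomial, Pi.sub_apply, ← sum_neg_distrib, Complex.exp_sum,
    ← prod_mul_distrib]

theorem stmt_19_general (d : ℕ) (α β : Fin d → ℕ) (z w : Fin d → ℂ) :
    Integrable (fun w₁ : Fin d → ℂ =>
        mpow w₁ α * mpow (fun i => (starRingEnd ℂ) (w₁ i)) β *
          Complex.exp (-(herm (z - w₁) (w - w₁)))) ∧
      ((Real.pi : ℂ) ^ d)⁻¹ *
          ∫ w₁ : Fin d → ℂ,
            mpow w₁ α * mpow (fun i => (starRingEnd ℂ) (w₁ i)) β *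
              Complex.exp (-(herm (z - w₁) (w - w₁))) =
        ∑ γ ∈ Finset.Iic α ∩ Finset.Iic β,
          (mchoose α γ : ℂ) * (mchoose β γ : ℂ) * (mfact γ : ℂ) *
            mpow z (α - γ) * mpow (fun i => (starRingEnd ℂ) (w i)) (β - γ) := by
  simp only [mpow_mul_mpow_conj_mul_exp_neg_herm]
  refine ⟨Integrable.fintype_prod fun i => integrable_gaussMonomial (z i) (w i) (α i) (β i), ?_⟩
  rw [integral_fintype_prod_volume_eq_prod (f := fun i => gaussMonomial (z i) (w i) (α i) (β i))]
  simp only [integral_gaussMonomial, prod_mul_distrib, prod_const, card_univ, Fintype.card_fin]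
  rw [inv_mul_cancel_left₀ (pow_ne_zero d (Complex.ofReal_ne_zero.mpr Real.pi_ne_zero)),
    prod_binomialSum]

/-- the Gaussian integral identity
`π^{−d} ∫ w₁^α w̄₁^β e^{−(z−w₁, w−w₁)} dλ(w₁)
  = Σ_{γ ≤ α, γ ≤ β} C(α,γ) C(β,γ) γ! z^{α−γ} w̄^{β−γ}`,
the integral being absolutely convergent; in particular, for `α = β = 0`,
`π^{−d} ∫ e^{−(z−w₁, w−w₁)} dλ(w₁) = 1`. -/
theorem stmt_19 (d : ℕ) (hd : 1 ≤ d) (α β : Fin d → ℕ) (z w : Fin d → ℂ) :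
    Integrable (fun w₁ : Fin d → ℂ =>
        mpow w₁ α * mpow (fun i => (starRingEnd ℂ) (w₁ i)) β *
          Complex.exp (-(herm (z - w₁) (w - w₁)))) ∧
      ((Real.pi : ℂ) ^ d)⁻¹ *
          ∫ w₁ : Fin d → ℂ,
            mpow w₁ α * mpow (fun i => (starRingEnd ℂ) (w₁ i)) β *
              Complex.exp (-(herm (z - w₁) (w - w₁))) =
        ∑ γ ∈ Finset.Iic α ∩ Finset.Iic β,
          (mchoose α γ : ℂ) * (mchoose β γ : ℂ) * (mfact γ : ℂ) *
            mpow z (α - γ) * mpow (fun i => (starRingEnd ℂ) (w i)) (β - γ) :=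
  stmt_19_general d α β z w

end
end
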